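/- arXiv:2407.08058 — 8 statements merged into one kernel-verified Lean document; each statement's English description precedes it below -/
import Mathlib

section
/- Let p = 2 and let K₁ = [[1, J₁₂], [J₁₂, 1]] with |J₁₂| < 1 (so K₁ is symmetric positive definite and normalized), b ∈ ℝ², f(β) = ⟨K₁β, β⟩ − 2⟨b, β⟩, β̂ = K₁⁻¹b = (β̂₁, β̂₂). Fix t > 0. Then the unique minimizer (β₁, β₂) of f over B₁(t) = {β ∈ ℝ² : |β₁| + |β₂| ≤ t} is given as follows. (1) Corner cases: (a) if β̂₁+β̂₂ > t and β̂₂−β̂₁ > t, then (β₁, β₂) = (0, t); (b) if −β̂₁−β̂₂ > t and β̂₂−β̂₁ > t, then (β₁, β₂) = (−t, 0); (c) if β̂₁−β̂₂ > t and −β̂₁−β̂₂ > t, then (β₁, β₂) = (0, −t); (d) if β̂₁+β̂₂ > t and β̂₁−β̂₂ > t, then (β₁, β₂) = (t, 0). (2) If |β̂₁−β̂₂| < t < |β̂₁+β̂₂|: (a) if β̂₁+β̂₂ > t, then β₁ = (t+β̂₁−β̂₂)/2 and β₂ = (t−β̂₁+β̂₂)/2; (b) if −β̂₁−β̂₂ >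 t, then β₁ = (−t+β̂₁−β̂₂)/2 and β₂ = (−t−β̂₁+β̂₂)/2. (3) If |β̂₁+β̂₂| < t < |β̂₁−β̂₂|: (a) if β̂₂−β̂₁ > t, then β₁ = (−t+β̂₁+β̂₂)/2 and β₂ = (t+β̂₁+β̂₂)/2; (b) if β̂₁−β̂₂ > t, then β₁ = (t+β̂₁+β̂₂)/2 and β₂ = (−t+β̂₁+β̂₂)/2. (4) If t > max{|β̂₁+β̂₂|, |β̂₁−β̂₂|}, then (β₁, β₂) = (β̂₁, β̂₂). -/
open Finset Matrix

lemma kkt_N (J t s0 s1 : ℝ) (hJ1 : -1 < J) (hJ2 : J < 1)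
    (h1 : t ≤ s0 + s1) (h2 : t ≤ s1 - s0) :
    ∀ x y : ℝ, |x| + |y| ≤ t →
      0 ≤ ((0 - s0) + J*(t - s1))*(x - 0) + (J*(0 - s0) + (t - s1))*(y - t) := by
  intro x y hxy
  have hg1 : (J*(0 - s0) + (t - s1)) ≤ 0 := by nlinarith [abs_le.mp (le_refl |s0|)]
  have hA : ((0 - s0) + J*(t - s1)) + (J*(0 - s0) + (t - s1)) ≤ 0 := by nlinarith
  have hB : (J*(0 - s0) + (t - s1)) ≤ ((0 - s0) + J*(t - s1)) := by nlinarith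
  rcases abs_cases x with ⟨ex, _⟩ | ⟨ex, _⟩ <;> rcases abs_cases y with ⟨ey, _⟩ | ⟨ey, _⟩ <;>
    rw [ex, ey] at hxy <;> nlinarith [hxy, hg1, hA, hB]

lemma kkt_S (J t s0 s1 : ℝ) (hJ1 : -1 < J) (hJ2 : J < 1)
    (h1 : t ≤ -s0 - s1) (h2 : t ≤ s0 - s1) :
    ∀ x y : ℝ, |x| + |y| ≤ t →
      0 ≤ ((0 - s0) + J*(-t - s1))*(x - 0) + (J*(0 - s0) + (-t - s1))*(y - -t) := by
  intro x y hxy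
  have h := kkt_N J t (-s0) (-s1) hJ1 hJ2 (by linarith) (by linarith) (-x) (-y)
    (by rw [abs_neg, abs_neg]; exact hxy)
  nlinarith [h]

lemma kkt_E (J t s0 s1 : ℝ) (hJ1 : -1 < J) (hJ2 : J < 1)
    (h1 : t ≤ s0 + s1) (h2 : t ≤ s0 - s1) :
    ∀ x y : ℝ, |x| + |y| ≤ t →
      0 ≤ ((t - s0) + J*(0 - s1))*(x - t) + (J*(t - s0) + (0 - s1))*(y - 0) := by
  intro x y hxy
  have h := kkt_N J t s1 s0 hJ1 hJ2 (by linarith) (by linarith) y x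
    (by rw [add_comm]; exact hxy)
  nlinarith [h]

lemma kkt_W (J t s0 s1 : ℝ) (hJ1 : -1 < J) (hJ2 : J < 1)
    (h1 : t ≤ -s0 - s1) (h2 : t ≤ s1 - s0) :
    ∀ x y : ℝ, |x| + |y| ≤ t →
      0 ≤ ((-t - s0) + J*(0 - s1))*(x - -t) + (J*(-t - s0) + (0 - s1))*(y - 0) := by
  intro x y hxy
  have h := kkt_E J t (-s0) (-s1) hJ1 hJ2 (by linarith) (by linarith) (-x) (-y)
    (by rw [abs_neg, abs_neg]; exact hxy)
  nlinarith [h]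

lemma kkt_NE (J t s0 s1 : ℝ) (hJ1 : -1 < J) (h1 : t ≤ s0 + s1) :
    ∀ x y : ℝ, |x| + |y| ≤ t →
      0 ≤ (((t + s0 - s1)/2 - s0) + J*((t - s0 + s1)/2 - s1))*(x - (t + s0 - s1)/2) +
          (J*((t + s0 - s1)/2 - s0) + ((t - s0 + s1)/2 - s1))*(y - (t - s0 + s1)/2) := by
  intro x y hxy
  nlinarith [mul_nonneg (by nlinarith : (0:ℝ) ≤ (1 + J)*(s0 + s1 - t))
    (by nlinarith [le_abs_self x, le_abs_self y] : (0:ℝ) ≤ t - x - y)]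

lemma kkt_SW (J t s0 s1 : ℝ) (hJ1 : -1 < J) (h1 : t ≤ -s0 - s1) :
    ∀ x y : ℝ, |x| + |y| ≤ t →
      0 ≤ (((-t + s0 - s1)/2 - s0) + J*((-t - s0 + s1)/2 - s1))*(x - (-t + s0 - s1)/2) +
          (J*((-t + s0 - s1)/2 - s0) + ((-t - s0 + s1)/2 - s1))*(y - (-t - s0 + s1)/2) := by
  intro x y hxy
  nlinarith [mul_nonneg (by nlinarith : (0:ℝ) ≤ (1 + J)*(-s0 - s1 - t))
    (by nlinarith [neg_abs_le x, neg_abs_le y] : (0:ℝ) ≤ t + x + y)]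

lemma kkt_SE (J t s0 s1 : ℝ) (hJ2 : J < 1) (h1 : t ≤ s0 - s1) :
    ∀ x y : ℝ, |x| + |y| ≤ t →
      0 ≤ (((t + s0 + s1)/2 - s0) + J*((-t + s0 + s1)/2 - s1))*(x - (t + s0 + s1)/2) +
          (J*((t + s0 + s1)/2 - s0) + ((-t + s0 + s1)/2 - s1))*(y - (-t + s0 + s1)/2) := by
  intro x y hxy
  nlinarith [mul_nonneg (by nlinarith : (0:ℝ) ≤ (1 - J)*(s0 - s1 - t))
    (by nlinarith [le_abs_self x, neg_abs_le y] : (0:ℝ) ≤ t - x + y)]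

lemma kkt_NW (J t s0 s1 : ℝ) (hJ2 : J < 1) (h1 : t ≤ s1 - s0) :
    ∀ x y : ℝ, |x| + |y| ≤ t →
      0 ≤ (((-t + s0 + s1)/2 - s0) + J*((t + s0 + s1)/2 - s1))*(x - (-t + s0 + s1)/2) +
          (J*((-t + s0 + s1)/2 - s0) + ((t + s0 + s1)/2 - s1))*(y - (t + s0 + s1)/2) := by
  intro x y hxy
  nlinarith [mul_nonneg (by nlinarith : (0:ℝ) ≤ (1 - J)*(s1 - s0 - t))
    (by nlinarith [neg_abs_le x, le_abs_self y] : (0:ℝ) ≤ t + x - y)]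

lemma opt_aux (J s0 s1 c d x y : ℝ) (hJ1 : -1 < J) (hJ2 : J < 1)
    (hk : 0 ≤ ((c - s0) + J*(d - s1))*(x - c) + (J*(c - s0) + (d - s1))*(y - d)) :
    c^2 + 2*J*c*d + d^2 - 2*((s0 + J*s1)*c + (J*s0 + s1)*d)
      ≤ x^2 + 2*J*x*y + y^2 - 2*((s0 + J*s1)*x + (J*s0 + s1)*y) := by
  nlinarith [mul_nonneg (by linarith : (0:ℝ) ≤ 1 + J) (sq_nonneg ((x - c) + (y - d))),
    mul_nonneg (by linarith : (0:ℝ) ≤ 1 - J) (sq_nonneg ((x - c) - (y - d))), hk]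

lemma uniq_aux (J b0 b1 a0 a1 c0 c1 : ℝ) (hJ1 : -1 < J) (hJ2 : J < 1)
    (h1 : a0^2 + 2*J*a0*a1 + a1^2 - 2*(b0*a0 + b1*a1) ≤
      ((a0+c0)/2)^2 + 2*J*((a0+c0)/2)*((a1+c1)/2) + ((a1+c1)/2)^2
        - 2*(b0*((a0+c0)/2) + b1*((a1+c1)/2)))
    (h4 : c0^2 + 2*J*c0*c1 + c1^2 - 2*(b0*c0 + b1*c1) ≤
      a0^2 + 2*J*a0*a1 + a1^2 - 2*(b0*a0 + b1*a1)) :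
    a0 = c0 ∧ a1 = c1 := by
  have hq : (1+J)*((a0-c0)+(a1-c1))^2 + (1-J)*((a0-c0)-(a1-c1))^2 ≤ 0 := by nlinarith
  have e1 : ((a0-c0)+(a1-c1))^2 = 0 := by
    nlinarith [sq_nonneg ((a0-c0)+(a1-c1)), sq_nonneg ((a0-c0)-(a1-c1))]
  have e2 : ((a0-c0)-(a1-c1))^2 = 0 := by
    nlinarith [sq_nonneg ((a0-c0)+(a1-c1)), sq_nonneg ((a0-c0)-(a1-c1))]
  have e1' := pow_eq_zero_iff two_ne_zero |>.mp e1
  have e2' := pow_eq_zero_iff two_ne_zero |>.mp e2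
  constructor <;> linarith


/-- closed-form solution of the lasso for `p = 2` with normalized
covariance matrix `K₁ = [[1, J₁₂], [J₁₂, 1]]`, `|J₁₂| < 1`.  The unique minimizer of
`f(β) = ⟨K₁β, β⟩ − 2⟨b, β⟩` over the ℓ¹-ball of radius `t` is given by the explicit
case-by-case formulas of Theorem `thm:lasop2`. -/
theorem stmt_6 (J₁₂ : ℝ) (hJ : |J₁₂| < 1) (b : Fin 2 → ℝ) (t : ℝ) (ht : 0 < t) :
    let K₁ : Matrix (Fin 2) (Fin 2) ℝ := !![1, J₁₂; J₁₂, 1]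
    let f : (Fin 2 → ℝ) → ℝ := fun β => (K₁ *ᵥ β) ⬝ᵥ β - 2 * (b ⬝ᵥ β)
    let βh : Fin 2 → ℝ := K₁⁻¹ *ᵥ b
    let Ball : Set (Fin 2 → ℝ) := {β | |β 0| + |β 1| ≤ t}
    let IsSol : (Fin 2 → ℝ) → Prop := fun βs => βs ∈ Ball ∧ ∀ β ∈ Ball, f βs ≤ f β
    (∃! βs, IsSol βs) ∧
    ∀ βs, IsSol βs →
      ((βh 0 + βh 1 > t ∧ βh 1 - βh 0 > t → βs = ![0, t]) ∧
       (-(βh 0) - βh 1 > t ∧ βh 1 - βh 0 > t → βs = ![-t, 0]) ∧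
       (βh 0 - βh 1 > t ∧ -(βh 0) - βh 1 > t → βs = ![0, -t]) ∧
       (βh 0 + βh 1 > t ∧ βh 0 - βh 1 > t → βs = ![t, 0]) ∧
       (|βh 0 - βh 1| < t ∧ t < |βh 0 + βh 1| ∧ βh 0 + βh 1 > t →
          βs = ![(t + βh 0 - βh 1) / 2, (t - βh 0 + βh 1) / 2]) ∧
       (|βh 0 - βh 1| < t ∧ t < |βh 0 + βh 1| ∧ -(βh 0) - βh 1 > t →
          βs = ![(-t + βh 0 - βh 1) / 2, (-t - βh 0 + βh 1) / 2]) ∧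
       (|βh 0 + βh 1| < t ∧ t < |βh 0 - βh 1| ∧ βh 1 - βh 0 > t →
          βs = ![(-t + βh 0 + βh 1) / 2, (t + βh 0 + βh 1) / 2]) ∧
       (|βh 0 + βh 1| < t ∧ t < |βh 0 - βh 1| ∧ βh 0 - βh 1 > t →
          βs = ![(t + βh 0 + βh 1) / 2, (-t + βh 0 + βh 1) / 2]) ∧
       (t > max |βh 0 + βh 1| |βh 0 - βh 1| → βs = βh)) := by
  intro K₁ f βh Ball IsSol
  obtain ⟨hJ1, hJ2⟩ := abs_lt.mp hJ
  have hdet : IsUnit K₁.det := by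
    have : K₁.det = 1 - J₁₂ * J₁₂ := by simp [K₁, Matrix.det_fin_two_of]
    rw [this, isUnit_iff_ne_zero]
    nlinarith
  have hK : K₁ *ᵥ βh = b := by
    show K₁ *ᵥ (K₁⁻¹ *ᵥ b) = b
    rw [Matrix.mulVec_mulVec, Matrix.mul_nonsing_inv _ hdet, Matrix.one_mulVec]
  have hb0 : b 0 = βh 0 + J₁₂ * βh 1 := by
    have h := congrFun hK 0
    simp [K₁, Matrix.mulVec, dotProduct, Fin.sum_univ_two] at h
    linarith
  have hb1 : b 1 = J₁₂ * βh 0 + βh 1 := by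
    have h := congrFun hK 1
    simp [K₁, Matrix.mulVec, dotProduct, Fin.sum_univ_two] at h
    linarith
  have hf : ∀ β : Fin 2 → ℝ, f β = (β 0)^2 + 2*J₁₂*(β 0)*(β 1) + (β 1)^2
      - 2*((βh 0 + J₁₂*βh 1)*(β 0) + (J₁₂*βh 0 + βh 1)*(β 1)) := by
    intro β
    show (K₁ *ᵥ β) ⬝ᵥ β - 2 * (b ⬝ᵥ β) = _
    simp [K₁, Matrix.mulVec, dotProduct, Fin.sum_univ_two, hb0, hb1]
    ring
  have key : ∀ c d : ℝ, |c| + |d| ≤ t →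
      (∀ x y : ℝ, |x| + |y| ≤ t →
        0 ≤ ((c - βh 0) + J₁₂*(d - βh 1))*(x - c) + (J₁₂*(c - βh 0) + (d - βh 1))*(y - d)) →
      IsSol ![c, d] := by
    intro c d hcd hkkt
    refine ⟨?_, ?_⟩
    · show |(![c, d]) 0| + |(![c, d]) 1| ≤ t
      simpa using hcd
    · intro β hβ
      have hβ' : |β 0| + |β 1| ≤ t := hβ
      rw [hf, hf]
      simp only [Matrix.cons_val_zero, Matrix.cons_val_one, Matrix.head_cons]
      exact opt_aux J₁₂ (βh 0) (βh 1) c d (β 0) (β 1) hJ1 hJ2 (hkkt (β 0) (β 1) hβ')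
  have uniq : ∀ u v : Fin 2 → ℝ, IsSol u → IsSol v → u = v := by
    rintro u v ⟨hu, hmu⟩ ⟨hv, hmv⟩
    have hu' : |u 0| + |u 1| ≤ t := hu
    have hv' : |v 0| + |v 1| ≤ t := hv
    have hm : (fun i => (u i + v i)/2) ∈ Ball := by
      show |(u 0 + v 0)/2| + |(u 1 + v 1)/2| ≤ t
      rw [abs_div, abs_div, abs_two]
      have := abs_add_le (u 0) (v 0)
      have := abs_add_le (u 1) (v 1)
      linarith
    have h1 : f u ≤ f (fun i => (u i + v i)/2) := hmu _ hm
    have h4 : f v ≤ f u := hmv u hu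
    rw [hf, hf] at h1
    rw [hf, hf] at h4
    obtain ⟨e0, e1⟩ := uniq_aux J₁₂ (βh 0 + J₁₂*βh 1) (J₁₂*βh 0 + βh 1)
      (u 0) (u 1) (v 0) (v 1) hJ1 hJ2 h1 h4
    funext i
    fin_cases i
    · exact e0
    · exact e1
  have hvec : ∀ β : Fin 2 → ℝ, ![β 0, β 1] = β := by
    intro β; funext i; fin_cases i <;> simp
  have sol_int : |βh 0| + |βh 1| ≤ t → IsSol βh := by
    intro h
    have hs := key (βh 0) (βh 1) h (by
      intro x y _
      have : ((βh 0 - βh 0) + J₁₂*(βh 1 - βh 1))*(x - βh 0) +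
          (J₁₂*(βh 0 - βh 0) + (βh 1 - βh 1))*(y - βh 1) = 0 := by ring
      linarith)
    rwa [hvec βh] at hs
  -- corner solutions
  have sol_N : t ≤ βh 0 + βh 1 → t ≤ βh 1 - βh 0 → IsSol ![0, t] := fun h1 h2 =>
    key 0 t (by simp [abs_of_nonneg ht.le]) (kkt_N J₁₂ t (βh 0) (βh 1) hJ1 hJ2 h1 h2)
  have sol_S : t ≤ -(βh 0) - βh 1 → t ≤ βh 0 - βh 1 → IsSol ![0, -t] := fun h1 h2 =>
    key 0 (-t) (by simp [abs_of_nonneg ht.le]) (kkt_S J₁₂ t (βh 0) (βh 1) hJ1 hJ2 (by linarith) h2)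
  have sol_E : t ≤ βh 0 + βh 1 → t ≤ βh 0 - βh 1 → IsSol ![t, 0] := fun h1 h2 =>
    key t 0 (by simp [abs_of_nonneg ht.le]) (kkt_E J₁₂ t (βh 0) (βh 1) hJ1 hJ2 h1 h2)
  have sol_W : t ≤ -(βh 0) - βh 1 → t ≤ βh 1 - βh 0 → IsSol ![-t, 0] := fun h1 h2 =>
    key (-t) 0 (by simp [abs_of_nonneg ht.le]) (kkt_W J₁₂ t (βh 0) (βh 1) hJ1 hJ2 (by linarith) h2)
  -- edge solutions
  have sol_NE : t ≤ βh 0 + βh 1 → βh 0 - βh 1 ≤ t → βh 1 - βh 0 ≤ t →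
      IsSol ![(t + βh 0 - βh 1)/2, (t - βh 0 + βh 1)/2] := by
    intro h1 h2 h3
    refine key _ _ ?_ (kkt_NE J₁₂ t (βh 0) (βh 1) hJ1 h1)
    rw [abs_of_nonneg (by linarith), abs_of_nonneg (by linarith)]
    linarith
  have sol_SW : t ≤ -(βh 0) - βh 1 → βh 0 - βh 1 ≤ t → βh 1 - βh 0 ≤ t →
      IsSol ![(-t + βh 0 - βh 1)/2, (-t - βh 0 + βh 1)/2] := by
    intro h1 h2 h3
    refine key _ _ ?_ (kkt_SW J₁₂ t (βh 0) (βh 1) hJ1 (by linarith))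
    rw [abs_of_nonpos (by linarith), abs_of_nonpos (by linarith)]
    linarith
  have sol_SE : t ≤ βh 0 - βh 1 → βh 0 + βh 1 ≤ t → -t ≤ βh 0 + βh 1 →
      IsSol ![(t + βh 0 + βh 1)/2, (-t + βh 0 + βh 1)/2] := by
    intro h1 h2 h3
    refine key _ _ ?_ (kkt_SE J₁₂ t (βh 0) (βh 1) hJ2 h1)
    rw [abs_of_nonneg (by linarith), abs_of_nonpos (by linarith)]
    linarith
  have sol_NW : t ≤ βh 1 - βh 0 → βh 0 + βh 1 ≤ t → -t ≤ βh 0 + βh 1 →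
      IsSol ![(-t + βh 0 + βh 1)/2, (t + βh 0 + βh 1)/2] := by
    intro h1 h2 h3
    refine key _ _ ?_ (kkt_NW J₁₂ t (βh 0) (βh 1) hJ2 h1)
    rw [abs_of_nonpos (by linarith), abs_of_nonneg (by linarith)]
    linarith
  have hex : ∃ βc, IsSol βc := by
    rcases le_total (βh 0 + βh 1) t with hA | hA
    · rcases le_total (-t) (βh 0 + βh 1) with hA' | hA'
      · rcases le_total (βh 0 - βh 1) t with hD | hD
        · rcases le_total (-t) (βh 0 - βh 1) with hD' | hD'
          · refine ⟨βh, sol_int ?_⟩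
            rcases abs_cases (βh 0) with ⟨e0, _⟩ | ⟨e0, _⟩ <;>
              rcases abs_cases (βh 1) with ⟨e1, _⟩ | ⟨e1, _⟩ <;> rw [e0, e1] <;> linarith
          · exact ⟨_, sol_NW (by linarith) hA hA'⟩
        · exact ⟨_, sol_SE hD hA hA'⟩
      · rcases le_total (βh 0 - βh 1) t with hD | hD
        · rcases le_total (-t) (βh 0 - βh 1) with hD' | hD'
          · exact ⟨_, sol_SW (by linarith) hD (by linarith)⟩
          · exact ⟨_, sol_W (by linarith) (by linarith)⟩
        · exact ⟨_, sol_S (by linarith) hD⟩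
    · rcases le_total (βh 0 - βh 1) t with hD | hD
      · rcases le_total (-t) (βh 0 - βh 1) with hD' | hD'
        · exact ⟨_, sol_NE hA hD (by linarith)⟩
        · exact ⟨_, sol_N hA (by linarith)⟩
      · exact ⟨_, sol_E hA hD⟩
  obtain ⟨βc, hβc⟩ := hex
  refine ⟨⟨βc, hβc, fun y hy => uniq y βc hy hβc⟩, ?_⟩
  intro βs hβs
  refine ⟨?_, ?_, ?_, ?_, ?_, ?_, ?_, ?_, ?_⟩
  · rintro ⟨h1, h2⟩; exact uniq βs _ hβs (sol_N h1.le h2.le)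
  · rintro ⟨h1, h2⟩; exact uniq βs _ hβs (sol_W h1.le h2.le)
  · rintro ⟨h1, h2⟩; exact uniq βs _ hβs (sol_S h2.le h1.le)
  · rintro ⟨h1, h2⟩; exact uniq βs _ hβs (sol_E h1.le h2.le)
  · rintro ⟨hd, _, hp⟩
    obtain ⟨hd1, hd2⟩ := abs_lt.mp hd
    exact uniq βs _ hβs (sol_NE hp.le (by linarith) (by linarith))
  · rintro ⟨hd, _, hp⟩
    obtain ⟨hd1, hd2⟩ := abs_lt.mp hd
    exact uniq βs _ hβs (sol_SW hp.le (by linarith) (by linarith))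
  · rintro ⟨ha, _, hp⟩
    obtain ⟨ha1, ha2⟩ := abs_lt.mp ha
    exact uniq βs _ hβs (sol_NW hp.le (by linarith) (by linarith))
  · rintro ⟨ha, _, hp⟩
    obtain ⟨ha1, ha2⟩ := abs_lt.mp ha
    exact uniq βs _ hβs (sol_SE hp.le (by linarith) (by linarith))
  · intro hmax
    have h1 : |βh 0 + βh 1| < t := lt_of_le_of_lt (le_max_left _ _) hmax
    have h2 : |βh 0 - βh 1| < t := lt_of_le_of_lt (le_max_right _ _) hmax
    obtain ⟨ha1, ha2⟩ := abs_lt.mp h1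
    obtain ⟨hb1', hb2'⟩ := abs_lt.mp h2
    refine uniq βs _ hβs (sol_int ?_)
    rcases abs_cases (βh 0) with ⟨e0, _⟩ | ⟨e0, _⟩ <;>
      rcases abs_cases (βh 1) with ⟨e1, _⟩ | ⟨e1, _⟩ <;> rw [e0, e1] <;> linarith
end

section
/- Let K₁ be a symmetric positive definite real p×p matrix, b ∈ ℝᵖ, f(β) = ⟨K₁β, β⟩ − 2⟨b, β⟩, and β̂ = K₁⁻¹b. Let δ ∈ {−1, 1}ᵖ and s ≤ 0, and set β(s) = β̂ + s·K₁⁻¹δ. Assume δⱼ·β(s)ⱼ ≥ 0 for every j = 1,…,p. Then β(s) is the unique minimizer of f over the ℓ¹-ball B₁(t) = {β ∈ ℝᵖ : Σⱼ|βⱼ| ≤ t} with t = Σⱼ|β(s)ⱼ| (= Σⱼ δⱼ β(s)ⱼ). -/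
open Finset Matrix

/-- if `β(s) = β̂ + s·K₁⁻¹δ` with `δ ∈ {−1,1}ᵖ`, `s ≤ 0`, and
`δⱼ·β(s)ⱼ ≥ 0` for all `j`, then `β(s)` is the unique minimizer of the lasso objective
over the ℓ¹-ball of radius `t = Σⱼ|β(s)ⱼ|`. -/
theorem stmt_7 (p : ℕ) (hp : 1 ≤ p)
    (K₁ : Matrix (Fin p) (Fin p) ℝ) (hsymm : K₁.IsSymm)
    (hpos : ∀ v : Fin p → ℝ, v ≠ 0 → 0 < (K₁ *ᵥ v) ⬝ᵥ v)
    (b δ : Fin p → ℝ) (hδ : ∀ j, δ j = 1 ∨ δ j = -1)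
    (s : ℝ) (hs : s ≤ 0)
    (βs : Fin p → ℝ) (hβs : βs = K₁⁻¹ *ᵥ b + s • (K₁⁻¹ *ᵥ δ))
    (hsign : ∀ j, 0 ≤ δ j * βs j)
    (t : ℝ) (ht : t = ∑ j, |βs j|) :
    let f : (Fin p → ℝ) → ℝ := fun β => (K₁ *ᵥ β) ⬝ᵥ β - 2 * (b ⬝ᵥ β)
    (∀ β : Fin p → ℝ, ∑ j, |β j| ≤ t → f βs ≤ f β) ∧
    (∀ β : Fin p → ℝ, ∑ j, |β j| ≤ t → f β = f βs → β = βs) := by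
  intro f
  -- K₁ is invertible
  have hunit : IsUnit K₁ := by
    rw [← Matrix.mulVec_injective_iff_isUnit]
    intro u v huv
    by_contra hne
    have h0 : K₁ *ᵥ (u - v) = 0 := by
      rw [Matrix.mulVec_sub, huv, sub_self]
    have := hpos (u - v) (sub_ne_zero.mpr hne)
    rw [h0] at this
    simp at this
  have hdet : IsUnit K₁.det := (Matrix.isUnit_iff_isUnit_det K₁).mp hunit
  -- K₁ *ᵥ βs = b + s • δ
  have hKβs : K₁ *ᵥ βs = b + s • δ := by
    rw [hβs, Matrix.mulVec_add, Matrix.mulVec_smul]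
    rw [Matrix.mulVec_mulVec, Matrix.mulVec_mulVec, Matrix.mul_nonsing_inv _ hdet,
      Matrix.one_mulVec, Matrix.one_mulVec]
  -- symmetry of the bilinear form
  have hsym : ∀ u v : Fin p → ℝ, (K₁ *ᵥ u) ⬝ᵥ v = (K₁ *ᵥ v) ⬝ᵥ u := by
    intro u v
    rw [dotProduct_comm, Matrix.dotProduct_mulVec, ← Matrix.mulVec_transpose,
      hsymm.eq]
  -- key identity
  have key : ∀ β : Fin p → ℝ,
      f β - f βs = (K₁ *ᵥ (β - βs)) ⬝ᵥ (β - βs) + 2 * s * (δ ⬝ᵥ (β - βs)) := by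
    intro β
    have hbv : ∀ v : Fin p → ℝ, b ⬝ᵥ v = (K₁ *ᵥ βs) ⬝ᵥ v - s * (δ ⬝ᵥ v) := by
      intro v
      rw [hKβs, add_dotProduct, smul_dotProduct, smul_eq_mul]; ring
    have hx : (K₁ *ᵥ βs) ⬝ᵥ β = (K₁ *ᵥ β) ⬝ᵥ βs := hsym βs β
    simp only [f, Matrix.mulVec_sub, sub_dotProduct, dotProduct_sub,
      hbv β, hbv βs]
    linarith [hx]
  -- δ ⬝ᵥ βs = t
  have hδβs : δ ⬝ᵥ βs = t := by
    rw [ht, dotProduct]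
    refine Finset.sum_congr rfl fun j _ => ?_
    have h1 : |βs j| = |δ j * βs j| := by
      rcases hδ j with h | h <;> rw [h] <;> simp [abs_neg]
    rw [h1, abs_of_nonneg (hsign j)]
  have hbound : ∀ β : Fin p → ℝ, ∑ j, |β j| ≤ t → δ ⬝ᵥ (β - βs) ≤ 0 := by
    intro β hβ
    have h1 : δ ⬝ᵥ β ≤ ∑ j, |β j| := by
      rw [dotProduct]
      refine Finset.sum_le_sum fun j _ => ?_
      calc δ j * β j ≤ |δ j * β j| := le_abs_self _
        _ = |β j| := by rcases hδ j with h | h <;> rw [h] <;> simp [abs_neg]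
    have := dotProduct_sub δ β βs
    rw [this, hδβs]
    linarith
  have main : ∀ β : Fin p → ℝ, ∑ j, |β j| ≤ t → f βs ≤ f β := by
    intro β hβ
    have hq : 0 ≤ (K₁ *ᵥ (β - βs)) ⬝ᵥ (β - βs) := by
      rcases eq_or_ne (β - βs) 0 with h | h
      · rw [h]; simp
      · exact (hpos _ h).le
    have h2 : 0 ≤ 2 * s * (δ ⬝ᵥ (β - βs)) := by
      have := hbound β hβ
      nlinarith
    have := key β
    linarith
  refine ⟨main, fun β hβ hf => ?_⟩
  by_contra hne
  have hq : 0 < (K₁ *ᵥ (β - βs)) ⬝ᵥ (β - βs) := hpos _ (sub_ne_zero.mpr hne)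
  have h2 : 0 ≤ 2 * s * (δ ⬝ᵥ (β - βs)) := by
    have := hbound β hβ
    nlinarith
  have := key β
  rw [hf] at this
  linarith
end

section
/- (Tangency/KKT characterization underlying the geometric formulation of the lasso.) Let K₁ be a symmetric positive definite real p×p matrix, b ∈ ℝᵖ, and f(β) = ⟨K₁β, β⟩ − 2⟨b, β⟩. Let β* ∈ ℝᵖ, let s ≤ 0, and let v ∈ ℝᵖ satisfy: |vⱼ| ≤ 1 for all j, vⱼ = 1 whenever β*ⱼ > 0, and vⱼ = −1 whenever β*ⱼ < 0. If K₁β* − b = s·v, then β* is the unique minimizer of f over the ℓ¹-ball B₁(t) = {β ∈ ℝᵖ : Σⱼ|βⱼ| ≤ t} with t = Σⱼ|β*ⱼ|. -/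
open Finset Matrix

/-- KKT/tangency characterization of lasso solutions: if
`K₁β* − b = s·v` with `s ≤ 0` and `v` a subgradient-type vector (`|vⱼ| ≤ 1`, equal to
the sign of `β*ⱼ` wherever `β*ⱼ ≠ 0`), then `β*` is the unique minimizer of the
objective over the ℓ¹-ball of radius `t = Σⱼ|β*ⱼ|`. -/
theorem stmt_8 (p : ℕ) (hp : 1 ≤ p)
    (K₁ : Matrix (Fin p) (Fin p) ℝ) (hsymm : K₁.IsSymm)
    (hpos : ∀ w : Fin p → ℝ, w ≠ 0 → 0 < (K₁ *ᵥ w) ⬝ᵥ w)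
    (b : Fin p → ℝ) (βs : Fin p → ℝ) (s : ℝ) (hs : s ≤ 0)
    (v : Fin p → ℝ)
    (hv1 : ∀ j, |v j| ≤ 1)
    (hvpos : ∀ j, 0 < βs j → v j = 1)
    (hvneg : ∀ j, βs j < 0 → v j = -1)
    (hKKT : K₁ *ᵥ βs - b = s • v)
    (t : ℝ) (ht : t = ∑ j, |βs j|) :
    let f : (Fin p → ℝ) → ℝ := fun β => (K₁ *ᵥ β) ⬝ᵥ β - 2 * (b ⬝ᵥ β)
    (∀ β : Fin p → ℝ, ∑ j, |β j| ≤ t → f βs ≤ f β) ∧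
    (∀ β : Fin p → ℝ, ∑ j, |β j| ≤ t → f β = f βs → β = βs) := by
  intro f
  have hsym : ∀ x y : Fin p → ℝ, (K₁ *ᵥ x) ⬝ᵥ y = (K₁ *ᵥ y) ⬝ᵥ x := by
    intro x y
    rw [dotProduct_comm, dotProduct_mulVec, ← mulVec_transpose, hsymm]
  -- value of v ⬝ᵥ βs
  have hvβs : v ⬝ᵥ βs = t := by
    rw [ht]
    refine Finset.sum_congr rfl fun j _ => ?_
    rcases lt_trichotomy (βs j) 0 with h | h | h
    · rw [hvneg j h, abs_of_neg h]; ring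
    · simp [h]
    · rw [hvpos j h, abs_of_pos h]; ring
  -- key quadratic expansion
  have key : ∀ β : Fin p → ℝ, f β - f βs
      = (K₁ *ᵥ (β - βs)) ⬝ᵥ (β - βs) + 2 * ((K₁ *ᵥ βs - b) ⬝ᵥ (β - βs)) := by
    intro β
    have h := hsym β βs
    simp only [f, mulVec_sub, sub_dotProduct, dotProduct_sub]
    rw [h]
    ring
  have hcross : ∀ β : Fin p → ℝ, (K₁ *ᵥ βs - b) ⬝ᵥ (β - βs) = s * (v ⬝ᵥ β - t) := by
    intro β
    rw [hKKT, smul_dotProduct, dotProduct_sub, hvβs, smul_eq_mul]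
  have hvβ : ∀ β : Fin p → ℝ, v ⬝ᵥ β ≤ ∑ j, |β j| := by
    intro β
    refine Finset.sum_le_sum fun j _ => ?_
    calc v j * β j ≤ |v j * β j| := le_abs_self _
    _ = |v j| * |β j| := abs_mul _ _
    _ ≤ 1 * |β j| := by
        exact mul_le_mul_of_nonneg_right (hv1 j) (abs_nonneg _)
    _ = |β j| := one_mul _
  have hquad : ∀ β : Fin p → ℝ, 0 ≤ (K₁ *ᵥ (β - βs)) ⬝ᵥ (β - βs) := by
    intro β
    by_cases h : β - βs = 0
    · rw [h]; simp
    · exact (hpos _ h).le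
  have hmain : ∀ β : Fin p → ℝ, ∑ j, |β j| ≤ t →
      f βs ≤ f β ∧ (f β = f βs → β = βs) := by
    intro β hβ
    have h1 : 0 ≤ s * (v ⬝ᵥ β - t) :=
      by nlinarith [hvβ β]
    have hk := key β
    rw [hcross β] at hk
    constructor
    · nlinarith [hquad β]
    · intro heq
      by_contra hne
      have hd : β - βs ≠ 0 := sub_ne_zero.mpr hne
      have := hpos _ hd
      nlinarith
  exact ⟨fun β hβ => (hmain β hβ).1, fun β hβ heq => (hmain β hβ).2 heq⟩
end

section
/- Let K₁ be a symmetric positive definite real p×p matrix, b ∈ ℝᵖ, f(β) = ⟨K₁β, β⟩ − 2⟨b, β⟩, β̂ = K₁⁻¹b, and t̂ = Σⱼ|β̂ⱼ|. Then for every t with 0 < t ≤ t̂, every minimizer β* of f over the ℓ¹-ball B₁(t) = {β ∈ ℝᵖ : Σⱼ|βⱼ| ≤ t} satisfies Σⱼ|β*ⱼ| = t; that is, for levels below t̂ the ℓ¹-constraint is active and the lasso solution lies on the boundary polyhedron B(t) = {β : Σⱼ|βⱼ| = t}. -/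
open Finset Matrix

lemma expand_aux (p : ℕ) (K₁ : Matrix (Fin p) (Fin p) ℝ) (hsymm : K₁.IsSymm)
    (b βs v : Fin p → ℝ) (ε : ℝ) :
    (K₁ *ᵥ (βs + ε • v)) ⬝ᵥ (βs + ε • v) - 2 * (b ⬝ᵥ (βs + ε • v)) =
      ((K₁ *ᵥ βs) ⬝ᵥ βs - 2 * (b ⬝ᵥ βs))
        + ε ^ 2 * ((K₁ *ᵥ v) ⬝ᵥ v)
        + 2 * ε * ((K₁ *ᵥ βs) ⬝ᵥ v - b ⬝ᵥ v) := by
  have hsym : (K₁ *ᵥ v) ⬝ᵥ βs = (K₁ *ᵥ βs) ⬝ᵥ v := by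
    rw [dotProduct_comm, dotProduct_mulVec, ← mulVec_transpose, hsymm.eq]
  simp only [mulVec_add, mulVec_smul, dotProduct_add, add_dotProduct,
    dotProduct_smul, smul_dotProduct, smul_eq_mul, hsym]
  ring

/-- for levels `0 < t ≤ t̂ = Σⱼ|β̂ⱼ|` (where `β̂ = K₁⁻¹b` is the
unconstrained minimizer), the ℓ¹-constraint is active: every lasso solution at level
`t` satisfies `Σⱼ|β*ⱼ| = t`. -/
theorem stmt_11 (p : ℕ) (hp : 1 ≤ p)
    (K₁ : Matrix (Fin p) (Fin p) ℝ) (hsymm : K₁.IsSymm)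
    (hpos : ∀ v : Fin p → ℝ, v ≠ 0 → 0 < (K₁ *ᵥ v) ⬝ᵥ v)
    (b : Fin p → ℝ) :
    let f : (Fin p → ℝ) → ℝ := fun β => (K₁ *ᵥ β) ⬝ᵥ β - 2 * (b ⬝ᵥ β)
    let βhat : Fin p → ℝ := K₁⁻¹ *ᵥ b
    let that : ℝ := ∑ j, |βhat j|
    ∀ t : ℝ, 0 < t → t ≤ that →
      ∀ βs : Fin p → ℝ, (∑ j, |βs j| ≤ t) →
        (∀ β : Fin p → ℝ, ∑ j, |β j| ≤ t → f βs ≤ f β) →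
        ∑ j, |βs j| = t := by
  intro f βhat that t ht htle βs hle hmin
  by_contra hne
  have hlt : ∑ j, |βs j| < t := lt_of_le_of_ne hle hne
  set v : Fin p → ℝ := b - K₁ *ᵥ βs with hv
  have hK : K₁ *ᵥ βs = b := by
    by_contra hKb
    have hv0 : v ≠ 0 := by
      intro h0
      apply hKb
      have : b - K₁ *ᵥ βs = 0 := h0
      exact (sub_eq_zero.mp this).symm
    have hQ : 0 < (K₁ *ᵥ v) ⬝ᵥ v := hpos v hv0
    have hL : (K₁ *ᵥ βs) ⬝ᵥ v - b ⬝ᵥ v = -(v ⬝ᵥ v) := by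
      simp only [hv, dotProduct_sub, sub_dotProduct]; ring
    have hvv : 0 < v ⬝ᵥ v := by
      rcases (Finset.sum_nonneg (fun i _ => mul_self_nonneg (v i))).lt_or_eq with h | h
      · exact h
      · exact absurd (dotProduct_self_eq_zero.mp h.symm) hv0
    have hS : 0 < ∑ j, |v j| := by
      rcases Finset.sum_nonneg (fun i (_ : i ∈ Finset.univ) => abs_nonneg (v i)) |>.lt_or_eq with h | h
      · exact h
      · exfalso; apply hv0; funext i
        have := (Finset.sum_eq_zero_iff_of_nonneg (fun i _ => abs_nonneg (v i))).mp h.symm i (Finset.mem_univ i)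
        simpa [abs_eq_zero] using this
    set ε : ℝ := min ((t - ∑ j, |βs j|) / (∑ j, |v j|)) ((v ⬝ᵥ v) / ((K₁ *ᵥ v) ⬝ᵥ v)) with hε
    have hε0 : 0 < ε := lt_min (div_pos (by linarith) hS) (div_pos hvv hQ)
    have hfeas : ∑ j, |(βs + ε • v) j| ≤ t := by
      have h1 : ∑ j, |(βs + ε • v) j| ≤ ∑ j, (|βs j| + ε * |v j|) := by
        apply Finset.sum_le_sum
        intro i _
        calc |(βs + ε • v) i| ≤ |βs i| + |ε * v i| := by simpa using abs_add_le (βs i) (ε * v i)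
          _ = |βs i| + ε * |v i| := by rw [abs_mul, abs_of_pos hε0]
      have h2 : ε * ∑ j, |v j| ≤ t - ∑ j, |βs j| := by
        rw [← le_div_iff₀ hS]
        exact min_le_left _ _
      rw [Finset.sum_add_distrib, ← Finset.mul_sum] at h1
      linarith
    have hmin' := hmin (βs + ε • v) hfeas
    have hexp := expand_aux p K₁ hsymm b βs v ε
    have hεQ : ε * ((K₁ *ᵥ v) ⬝ᵥ v) ≤ v ⬝ᵥ v := by
      rw [← le_div_iff₀ hQ] at *
      exact min_le_right _ _
    simp only [f] at hmin'
    rw [hexp, hL] at hmin'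
    nlinarith [hε0, hvv, hQ]
  have hpd : K₁.PosDef := by
    refine Matrix.PosDef.of_dotProduct_mulVec_pos ?_ ?_
    · rwa [Matrix.IsHermitian, conjTranspose_eq_transpose_of_trivial, ← Matrix.IsSymm]
    · intro x hx
      simpa [dotProduct_comm] using hpos x hx
  have hinv : K₁⁻¹ * K₁ = 1 := Matrix.nonsing_inv_mul _ (isUnit_iff_ne_zero.mpr (ne_of_gt hpd.det_pos))
  have hb : βhat = βs := by
    show K₁⁻¹ *ᵥ b = βs
    rw [← hK, mulVec_mulVec, hinv, one_mulVec]
  have hb' : K₁⁻¹ *ᵥ b = βs := hb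
  have : t ≤ ∑ j, |βs j| := by simpa [that, βhat, hb'] using htle
  linarith
end

section
/- (No-return property.) Let K₁ be a symmetric positive definite real p×p matrix, b ∈ ℝᵖ, and f(β) = ⟨K₁β, β⟩ − 2⟨b, β⟩. Let 0 < t₃ < t₂ < t₁ and σ ∈ {−1, 1}ᵖ. Suppose β*₁ is a minimizer of f over B₁(t₁) and β*₃ is a minimizer of f over B₁(t₃), and that both β*₁ and β*₃ have strict sign pattern σ. Then every minimizer β*₂ of f over B₁(t₂) also has strict sign pattern σ. In other words, if the lasso solution leaves the interior of one orthant as t decreases, it never returns to the interior of that orthant. -/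
open Finset Matrix


variable {p : ℕ}

lemma symm_swap (K : Matrix (Fin p) (Fin p) ℝ) (hs : K.IsSymm) (x y : Fin p → ℝ) :
    (K *ᵥ x) ⬝ᵥ y = (K *ᵥ y) ⬝ᵥ x := by
  calc (K *ᵥ x) ⬝ᵥ y = y ⬝ᵥ (K *ᵥ x) := (dotProduct_comm _ _)
    _ = (y ᵥ* K) ⬝ᵥ x := dotProduct_mulVec _ _ _
    _ = (K *ᵥ y) ⬝ᵥ x := by nth_rewrite 1 [← hs]; rw [vecMul_transpose]

lemma expand (K : Matrix (Fin p) (Fin p) ℝ) (hs : K.IsSymm) (b x d : Fin p → ℝ) (ε : ℝ) :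
    (K *ᵥ (x + ε • d)) ⬝ᵥ (x + ε • d) - 2 * (b ⬝ᵥ (x + ε • d)) =
      ((K *ᵥ x) ⬝ᵥ x - 2 * (b ⬝ᵥ x)) + ε * (2 * ((K *ᵥ x) ⬝ᵥ d) - 2 * (b ⬝ᵥ d))
        + ε ^ 2 * ((K *ᵥ d) ⬝ᵥ d) := by
  have hswap := symm_swap K hs d x
  simp only [mulVec_add, mulVec_smul, add_dotProduct, smul_dotProduct, dotProduct_add,
    dotProduct_smul, smul_eq_mul]
  linear_combination ε * hswap

/-- abs as signed value -/
lemma abs_eq_sign (σ : Fin p → ℝ) (hσ : ∀ j, σ j = 1 ∨ σ j = -1)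
    (y : Fin p → ℝ) (hy : ∀ j, 0 < σ j * y j) (j : Fin p) : |y j| = σ j * y j := by
  rcases hσ j with h | h
  · have := hy j; rw [h, one_mul] at this
    rw [h, one_mul]; exact abs_of_pos this
  · rw [h]; have := hy j; rw [h] at this
    have hneg : y j < 0 := by nlinarith
    rw [abs_of_neg hneg]; ring

lemma sum_abs_eq (σ : Fin p → ℝ) (hσ : ∀ j, σ j = 1 ∨ σ j = -1)
    (y : Fin p → ℝ) (hy : ∀ j, 0 < σ j * y j) : ∑ j, |y j| = σ ⬝ᵥ y := by
  unfold dotProduct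
  exact Finset.sum_congr rfl fun j _ => abs_eq_sign σ hσ y hy j

/-- quadratic form nonneg -/
lemma quad_nonneg (K : Matrix (Fin p) (Fin p) ℝ)
    (hpos : ∀ v : Fin p → ℝ, v ≠ 0 → 0 < (K *ᵥ v) ⬝ᵥ v) (d : Fin p → ℝ) :
    0 ≤ (K *ᵥ d) ⬝ᵥ d := by
  by_cases hd : d = 0
  · subst hd; simp
  · exact (hpos d hd).le

/-- uniqueness of minimizer -/
lemma min_unique (K : Matrix (Fin p) (Fin p) ℝ) (hs : K.IsSymm)
    (hpos : ∀ v : Fin p → ℝ, v ≠ 0 → 0 < (K *ᵥ v) ⬝ᵥ v) (b : Fin p → ℝ) (t : ℝ)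
    (x y : Fin p → ℝ) (hx : ∑ j, |x j| ≤ t) (hy : ∑ j, |y j| ≤ t)
    (hminx : ∀ β : Fin p → ℝ, ∑ j, |β j| ≤ t →
      (K *ᵥ x) ⬝ᵥ x - 2 * (b ⬝ᵥ x) ≤ (K *ᵥ β) ⬝ᵥ β - 2 * (b ⬝ᵥ β))
    (heq : (K *ᵥ x) ⬝ᵥ x - 2 * (b ⬝ᵥ x) = (K *ᵥ y) ⬝ᵥ y - 2 * (b ⬝ᵥ y)) :
    x = y := by
  set d : Fin p → ℝ := y - x with hd
  have hyd : y = x + (1 : ℝ) • d := by simp [hd]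
  have hmd : ∑ j, |(x + (1/2 : ℝ) • d) j| ≤ t := by
    calc ∑ j, |(x + (1/2 : ℝ) • d) j| = ∑ j, |(x j + y j) / 2| := by
          apply Finset.sum_congr rfl; intro j _; congr 1
          simp [hd]; ring
      _ ≤ ∑ j, (|x j| + |y j|) / 2 := by
          apply Finset.sum_le_sum; intro j _
          rw [abs_div, abs_two]
          linarith [abs_add_le (x j) (y j)]
      _ = (∑ j, |x j| + ∑ j, |y j|) / 2 := by rw [← Finset.sum_add_distrib, Finset.sum_div]
      _ ≤ t := by linarith
  have h1 := expand K hs b x d 1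
  have h2 := expand K hs b x d (1/2)
  have hmin := hminx _ hmd
  rw [h2] at hmin
  rw [hyd, h1] at heq
  have hQ : (K *ᵥ d) ⬝ᵥ d ≤ 0 := by nlinarith
  have hd0 : d = 0 := by
    by_contra h
    exact absurd (hpos d h) (not_lt.mpr hQ)
  rw [hd] at hd0
  exact (sub_eq_zero.mp hd0).symm


/-- small perturbations keep strict signs -/
lemma perturb (hp : 1 ≤ p) (σ : Fin p → ℝ) (hσ : ∀ j, σ j = 1 ∨ σ j = -1)
    (x : Fin p → ℝ) (hx : ∀ j, 0 < σ j * x j) (d : Fin p → ℝ) :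
    ∃ ε₀ > 0, ∀ ε : ℝ, |ε| ≤ ε₀ → ∀ j, 0 < σ j * (x j + ε * d j) := by
  have hne : (Finset.univ : Finset (Fin p)).Nonempty := ⟨⟨0, hp⟩, Finset.mem_univ _⟩
  set ε₀ := Finset.univ.inf' hne fun j => σ j * x j / (|d j| + 1) with hε₀
  have hε₀pos : 0 < ε₀ := by
    rw [hε₀, Finset.lt_inf'_iff]
    intro j _
    exact div_pos (hx j) (by positivity)
  refine ⟨ε₀, hε₀pos, fun ε hε j => ?_⟩
  have hle : ε₀ ≤ σ j * x j / (|d j| + 1) := Finset.inf'_le _ (Finset.mem_univ j)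
  have habsσ : |σ j| = 1 := by rcases hσ j with h | h <;> rw [h] <;> norm_num
  have hb : |ε * (σ j * d j)| ≤ ε₀ * |d j| := by
    rw [abs_mul, abs_mul, habsσ, one_mul]
    exact mul_le_mul_of_nonneg_right hε (abs_nonneg _)
  have hkey : ε₀ * |d j| < σ j * x j := by
    have h1 : ε₀ * (|d j| + 1) ≤ σ j * x j := by
      rw [le_div_iff₀ (by positivity)] at hle; linarith
    nlinarith [hε₀pos]
  have : σ j * (x j + ε * d j) = σ j * x j + ε * (σ j * d j) := by ring
  rw [this]
  have := neg_abs_le (ε * (σ j * d j))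
  linarith

/-- stationarity: gradient is a nonpositive multiple of σ -/
lemma stationary (hp : 1 ≤ p) (K : Matrix (Fin p) (Fin p) ℝ) (hs : K.IsSymm)
    (hpos : ∀ v : Fin p → ℝ, v ≠ 0 → 0 < (K *ᵥ v) ⬝ᵥ v) (b : Fin p → ℝ)
    (σ : Fin p → ℝ) (hσ : ∀ j, σ j = 1 ∨ σ j = -1) (t : ℝ)
    (x : Fin p → ℝ) (hmem : ∑ j, |x j| ≤ t)
    (hmin : ∀ β : Fin p → ℝ, ∑ j, |β j| ≤ t →
      (K *ᵥ x) ⬝ᵥ x - 2 * (b ⬝ᵥ x) ≤ (K *ᵥ β) ⬝ᵥ β - 2 * (b ⬝ᵥ β))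
    (hsign : ∀ j, 0 < σ j * x j) :
    ∃ c : ℝ, c ≤ 0 ∧ ∀ j, 2 * ((K *ᵥ x) j - b j) = c * σ j := by
  have hσx : σ ⬝ᵥ x ≤ t := by rw [← sum_abs_eq σ hσ x hsign]; exact hmem
  have hσσ : σ ⬝ᵥ σ = (p : ℝ) := by
    unfold dotProduct
    rw [Finset.sum_congr rfl (fun j _ => by rcases hσ j with h | h <;> rw [h] <;> norm_num)]
    simp
  -- Claim A: directions orthogonal to σ
  have claimA : ∀ d : Fin p → ℝ, σ ⬝ᵥ d = 0 →
      2 * ((K *ᵥ x) ⬝ᵥ d) - 2 * (b ⬝ᵥ d) = 0 := by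
    intro d hd
    obtain ⟨ε₀, hε₀, hfeas⟩ := perturb hp σ hσ x hsign d
    set L := 2 * ((K *ᵥ x) ⬝ᵥ d) - 2 * (b ⬝ᵥ d) with hL
    set Q := (K *ᵥ d) ⬝ᵥ d with hQdef
    have hQ : 0 ≤ Q := quad_nonneg K hpos d
    have hineq : ∀ ε : ℝ, |ε| ≤ ε₀ → 0 ≤ ε * L + ε ^ 2 * Q := by
      intro ε hε
      have hsgn := hfeas ε hε
      have hmemε : ∑ j, |(x + ε • d) j| ≤ t := by
        rw [sum_abs_eq σ hσ _ (fun j => by simpa using hsgn j)]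
        rw [dotProduct_add, dotProduct_smul, smul_eq_mul, hd]
        linarith
      have := hmin _ hmemε
      rw [expand K hs b x d ε, ← hL, ← hQdef] at this
      linarith
    have hboth : ∀ ε : ℝ, 0 < ε → ε ≤ ε₀ → |L| ≤ ε * Q := by
      intro ε hε hεle
      have h1 := hineq ε (by rw [abs_of_pos hε]; exact hεle)
      have h2 := hineq (-ε) (by rw [abs_neg, abs_of_pos hε]; exact hεle)
      rw [abs_le]
      constructor <;> nlinarith
    have hLle : ∀ η : ℝ, 0 < η → |L| ≤ η := by
      intro η hη
      have hεpos : 0 < min ε₀ (η / (Q + 1)) := lt_min hε₀ (by positivity)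
      have := hboth _ hεpos (min_le_left _ _)
      have h2 : min ε₀ (η / (Q + 1)) * Q ≤ η := by
        have : min ε₀ (η / (Q + 1)) ≤ η / (Q + 1) := min_le_right _ _
        have hq1 : (0:ℝ) < Q + 1 := by linarith
        calc min ε₀ (η / (Q + 1)) * Q ≤ (η / (Q + 1)) * Q :=
              mul_le_mul_of_nonneg_right this hQ
          _ ≤ η := by rw [div_mul_eq_mul_div, div_le_iff₀ hq1]; nlinarith
      linarith
    have : |L| ≤ 0 := by
      by_contra h
      push_neg at h
      have := hLle (|L| / 2) (by linarith)
      linarith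
    exact abs_eq_zero.mp (le_antisymm this (abs_nonneg _))
  -- Claim B: direction -σ
  have claimB : 2 * ((K *ᵥ x) ⬝ᵥ σ) - 2 * (b ⬝ᵥ σ) ≤ 0 := by
    obtain ⟨ε₀, hε₀, hfeas⟩ := perturb hp σ hσ x hsign σ
    set L := 2 * ((K *ᵥ x) ⬝ᵥ σ) - 2 * (b ⬝ᵥ σ) with hL
    set Q := (K *ᵥ σ) ⬝ᵥ σ with hQdef
    have hQ : 0 ≤ Q := quad_nonneg K hpos σ
    have hineq : ∀ ε : ℝ, -ε₀ ≤ ε → ε ≤ 0 → 0 ≤ ε * L + ε ^ 2 * Q := by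
      intro ε hε1 hε2
      have habs : |ε| ≤ ε₀ := by rw [abs_le]; constructor <;> linarith
      have hsgn := hfeas ε habs
      have hmemε : ∑ j, |(x + ε • σ) j| ≤ t := by
        rw [sum_abs_eq σ hσ _ (fun j => by simpa using hsgn j)]
        rw [dotProduct_add, dotProduct_smul, smul_eq_mul, hσσ]
        have : ε * (p : ℝ) ≤ 0 := mul_nonpos_of_nonpos_of_nonneg hε2 (Nat.cast_nonneg p)
        linarith
      have := hmin _ hmemε
      rw [expand K hs b x σ ε, ← hL, ← hQdef] at this
      linarith
    have hboth : ∀ ε : ℝ, 0 < ε → ε ≤ ε₀ → L ≤ ε * Q := by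
      intro ε hε hεle
      have h1 := hineq (-ε) (by linarith) (by linarith)
      nlinarith
    by_contra h
    push_neg at h
    have hεpos : 0 < min ε₀ (L / (2 * (Q + 1))) := lt_min hε₀ (by positivity)
    have h1 := hboth _ hεpos (min_le_left _ _)
    have h2 : min ε₀ (L / (2 * (Q + 1))) * Q < L := by
      have hle : min ε₀ (L / (2 * (Q + 1))) ≤ L / (2 * (Q + 1)) := min_le_right _ _
      have hq1 : (0:ℝ) < 2 * (Q + 1) := by linarith
      calc min ε₀ (L / (2 * (Q + 1))) * Q ≤ (L / (2 * (Q + 1))) * Q :=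
            mul_le_mul_of_nonneg_right hle hQ
        _ < L := by rw [div_mul_eq_mul_div, div_lt_iff₀ hq1]; nlinarith
    linarith
  -- bridging: gradient vector
  set g : Fin p → ℝ := fun j => 2 * ((K *ᵥ x) j - b j) with hg
  have hgdot : ∀ d : Fin p → ℝ, g ⬝ᵥ d = 2 * ((K *ᵥ x) ⬝ᵥ d) - 2 * (b ⬝ᵥ d) := by
    intro d
    unfold dotProduct
    rw [Finset.mul_sum, Finset.mul_sum, ← Finset.sum_sub_distrib]
    exact Finset.sum_congr rfl fun j _ => by simp [hg]; ring
  set c : ℝ := (g ⬝ᵥ σ) / p with hc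
  have hppos : (0:ℝ) < p := by exact_mod_cast hp
  have hgσ : g ⬝ᵥ σ ≤ 0 := by rw [hgdot]; exact claimB
  refine ⟨c, div_nonpos_of_nonpos_of_nonneg hgσ (Nat.cast_nonneg p), ?_⟩
  set d : Fin p → ℝ := fun j => g j - c * σ j with hdd
  have hσd : σ ⬝ᵥ d = 0 := by
    have : σ ⬝ᵥ d = σ ⬝ᵥ g - c * (σ ⬝ᵥ σ) := by
      unfold dotProduct
      rw [Finset.mul_sum, ← Finset.sum_sub_distrib]
      exact Finset.sum_congr rfl fun j _ => by simp [hdd]; ring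
    rw [this, hσσ, hc, dotProduct_comm]
    field_simp
    ring
  have hgd : g ⬝ᵥ d = 0 := by rw [hgdot]; exact claimA d hσd
  have hdd0 : d ⬝ᵥ d = 0 := by
    have : d ⬝ᵥ d = g ⬝ᵥ d - c * (σ ⬝ᵥ d) := by
      unfold dotProduct
      rw [Finset.mul_sum, ← Finset.sum_sub_distrib]
      exact Finset.sum_congr rfl fun j _ => by simp [hdd]; ring
    rw [this, hgd, hσd]; ring
  have hd0 : ∀ j, d j = 0 := by
    intro j
    have hsum : ∑ i, d i * d i = 0 := hdd0
    have := (Finset.sum_eq_zero_iff_of_nonneg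
      (fun i _ => mul_self_nonneg (d i))).mp hsum j (Finset.mem_univ j)
    exact mul_self_eq_zero.mp this
  intro j
  have := hd0 j
  simp only [hdd] at this
  have : g j = c * σ j := by linarith
  simpa [hg] using this

/-- no-return property: if the lasso solutions at levels `t₁ > t₃` both
have strict sign pattern `σ`, then every lasso solution at any intermediate level
`t₂` (with `t₃ < t₂ < t₁`) also has strict sign pattern `σ`. -/
theorem stmt_13 (p : ℕ) (hp : 1 ≤ p)
    (K₁ : Matrix (Fin p) (Fin p) ℝ) (hsymm : K₁.IsSymm)
    (hpos : ∀ v : Fin p → ℝ, v ≠ 0 → 0 < (K₁ *ᵥ v) ⬝ᵥ v)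
    (b : Fin p → ℝ)
    (σ : Fin p → ℝ) (hσ : ∀ j, σ j = 1 ∨ σ j = -1)
    (t₁ t₂ t₃ : ℝ) (ht₃ : 0 < t₃) (h32 : t₃ < t₂) (h21 : t₂ < t₁)
    (β₁ β₂ β₃ : Fin p → ℝ)
    (hmem₁ : ∑ j, |β₁ j| ≤ t₁)
    (hmin₁ : ∀ β : Fin p → ℝ, ∑ j, |β j| ≤ t₁ →
      (K₁ *ᵥ β₁) ⬝ᵥ β₁ - 2 * (b ⬝ᵥ β₁) ≤ (K₁ *ᵥ β) ⬝ᵥ β - 2 * (b ⬝ᵥ β))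
    (hmem₃ : ∑ j, |β₃ j| ≤ t₃)
    (hmin₃ : ∀ β : Fin p → ℝ, ∑ j, |β j| ≤ t₃ →
      (K₁ *ᵥ β₃) ⬝ᵥ β₃ - 2 * (b ⬝ᵥ β₃) ≤ (K₁ *ᵥ β) ⬝ᵥ β - 2 * (b ⬝ᵥ β))
    (hsign₁ : ∀ j, 0 < σ j * β₁ j)
    (hsign₃ : ∀ j, 0 < σ j * β₃ j)
    (hmem₂ : ∑ j, |β₂ j| ≤ t₂)
    (hmin₂ : ∀ β : Fin p → ℝ, ∑ j, |β j| ≤ t₂ →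
      (K₁ *ᵥ β₂) ⬝ᵥ β₂ - 2 * (b ⬝ᵥ β₂) ≤ (K₁ *ᵥ β) ⬝ᵥ β - 2 * (b ⬝ᵥ β)) :
    ∀ j, 0 < σ j * β₂ j := by
  set s₁ := σ ⬝ᵥ β₁ with hs₁
  set s₃ := σ ⬝ᵥ β₃ with hs₃
  have habs₁ : ∑ j, |β₁ j| = s₁ := sum_abs_eq σ hσ β₁ hsign₁
  have habs₃ : ∑ j, |β₃ j| = s₃ := sum_abs_eq σ hσ β₃ hsign₃
  by_cases hcase : s₁ ≤ t₂
  · -- β₁ is feasible at level t₂, so β₂ = β₁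
    have h1 : (K₁ *ᵥ β₂) ⬝ᵥ β₂ - 2 * (b ⬝ᵥ β₂) ≤ (K₁ *ᵥ β₁) ⬝ᵥ β₁ - 2 * (b ⬝ᵥ β₁) :=
      hmin₂ β₁ (by rw [habs₁]; exact hcase)
    have h2 : (K₁ *ᵥ β₁) ⬝ᵥ β₁ - 2 * (b ⬝ᵥ β₁) ≤ (K₁ *ᵥ β₂) ⬝ᵥ β₂ - 2 * (b ⬝ᵥ β₂) :=
      hmin₁ β₂ (by linarith)
    have heq := min_unique K₁ hsymm hpos b t₂ β₂ β₁ hmem₂ (by rw [habs₁]; exact hcase)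
      hmin₂ (le_antisymm h1 h2)
    intro j; rw [heq]; exact hsign₁ j
  · push_neg at hcase
    obtain ⟨c₁, hc₁le, hc₁⟩ := stationary hp K₁ hsymm hpos b σ hσ t₁ β₁ hmem₁ hmin₁ hsign₁
    obtain ⟨c₃, hc₃le, hc₃⟩ := stationary hp K₁ hsymm hpos b σ hσ t₃ β₃ hmem₃ hmin₃ hsign₃
    have hs₃t : s₃ ≤ t₃ := by rw [← habs₃]; exact hmem₃
    have hlt : s₃ < s₁ := by linarith
    set lam : ℝ := (t₂ - s₃) / (s₁ - s₃) with hlam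
    have hlam0 : 0 < lam := div_pos (by linarith) (by linarith)
    have hlam1 : lam < 1 := by
      rw [hlam, div_lt_one (by linarith)]; linarith
    obtain ⟨w, hw⟩ : ∃ w : Fin p → ℝ, w = fun j => lam * β₁ j + (1 - lam) * β₃ j := ⟨_, rfl⟩
    have hsignw : ∀ j, 0 < σ j * w j := by
      intro j
      have h1 := hsign₁ j; have h3 := hsign₃ j
      have : σ j * w j = lam * (σ j * β₁ j) + (1 - lam) * (σ j * β₃ j) := by
        simp [hw]; ring
      rw [this]
      have := mul_pos hlam0 h1
      have := mul_pos (by linarith : (0:ℝ) < 1 - lam) h3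
      linarith
    have hσw : σ ⬝ᵥ w = t₂ := by
      have hexp : σ ⬝ᵥ w = lam * s₁ + (1 - lam) * s₃ := by
        rw [hs₁, hs₃]
        unfold dotProduct
        rw [Finset.mul_sum, Finset.mul_sum, ← Finset.sum_add_distrib]
        exact Finset.sum_congr rfl fun j _ => by simp [hw]; ring
      have hne : s₁ - s₃ ≠ 0 := ne_of_gt (by linarith)
      rw [hexp, hlam]
      field_simp
      ring
    have habsw : ∑ j, |w j| = t₂ := by rw [sum_abs_eq σ hσ w hsignw]; exact hσw
    -- gradient at w
    set cw : ℝ := lam * c₁ + (1 - lam) * c₃ with hcw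
    have hcwle : cw ≤ 0 := by
      have := mul_nonpos_of_nonneg_of_nonpos hlam0.le hc₁le
      have := mul_nonpos_of_nonneg_of_nonpos (by linarith : (0:ℝ) ≤ 1 - lam) hc₃le
      rw [hcw]; linarith
    have hKw : ∀ j, (K₁ *ᵥ w) j = lam * (K₁ *ᵥ β₁) j + (1 - lam) * (K₁ *ᵥ β₃) j := by
      intro j
      have : w = lam • β₁ + (1 - lam) • β₃ := by funext i; simp [hw]
      rw [this, mulVec_add, mulVec_smul, mulVec_smul]
      simp
    have hgw : ∀ j, 2 * ((K₁ *ᵥ w) j - b j) = cw * σ j := by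
      intro j
      have h1 := hc₁ j; have h3 := hc₃ j
      rw [hKw j, hcw]
      nlinarith [h1, h3]
    -- w is a minimizer at level t₂
    have hminw : ∀ z : Fin p → ℝ, ∑ j, |z j| ≤ t₂ →
        (K₁ *ᵥ w) ⬝ᵥ w - 2 * (b ⬝ᵥ w) ≤ (K₁ *ᵥ z) ⬝ᵥ z - 2 * (b ⬝ᵥ z) := by
      intro z hz
      have hzw : z = w + (1 : ℝ) • (z - w) := by simp
      have hexp := expand K₁ hsymm b w (z - w) 1
      have hQ : 0 ≤ (K₁ *ᵥ (z - w)) ⬝ᵥ (z - w) := quad_nonneg K₁ hpos (z - w)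
      have hgdot : 2 * ((K₁ *ᵥ w) ⬝ᵥ (z - w)) - 2 * (b ⬝ᵥ (z - w))
          = cw * (σ ⬝ᵥ z - σ ⬝ᵥ w) := by
        have hL : 2 * ((K₁ *ᵥ w) ⬝ᵥ (z - w)) - 2 * (b ⬝ᵥ (z - w))
            = ∑ j, (2 * ((K₁ *ᵥ w) j - b j)) * (z - w) j := by
          unfold dotProduct
          rw [Finset.mul_sum, Finset.mul_sum, ← Finset.sum_sub_distrib]
          exact Finset.sum_congr rfl fun j _ => by ring
        rw [hL, ← dotProduct_sub]
        unfold dotProduct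
        rw [Finset.mul_sum]
        exact Finset.sum_congr rfl fun j _ => by rw [hgw j]; ring
      have hσz : σ ⬝ᵥ z ≤ t₂ := by
        calc σ ⬝ᵥ z ≤ ∑ j, |z j| := by
              unfold dotProduct
              apply Finset.sum_le_sum
              intro j _
              calc σ j * z j ≤ |σ j * z j| := le_abs_self _
                _ = |z j| := by
                    rw [abs_mul]
                    rcases hσ j with h | h <;> rw [h] <;> norm_num
          _ ≤ t₂ := hz
      have hnn : 0 ≤ cw * (σ ⬝ᵥ z - σ ⬝ᵥ w) := by
        rw [hσw]
        nlinarith [hcwle, hσz]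
      calc (K₁ *ᵥ w) ⬝ᵥ w - 2 * (b ⬝ᵥ w)
          ≤ (K₁ *ᵥ w) ⬝ᵥ w - 2 * (b ⬝ᵥ w)
            + 1 * (2 * ((K₁ *ᵥ w) ⬝ᵥ (z - w)) - 2 * (b ⬝ᵥ (z - w)))
            + 1 ^ 2 * ((K₁ *ᵥ (z - w)) ⬝ᵥ (z - w)) := by
            linarith [hgdot, hnn, hQ]
        _ = (K₁ *ᵥ z) ⬝ᵥ z - 2 * (b ⬝ᵥ z) := by rw [← hexp, ← hzw]
    -- conclude β₂ = w
    have h1 : (K₁ *ᵥ β₂) ⬝ᵥ β₂ - 2 * (b ⬝ᵥ β₂) ≤ (K₁ *ᵥ w) ⬝ᵥ w - 2 * (b ⬝ᵥ w) :=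
      hmin₂ w (le_of_eq habsw)
    have h2 := hminw β₂ hmem₂
    have heq := min_unique K₁ hsymm hpos b t₂ β₂ w hmem₂ (le_of_eq habsw)
      hmin₂ (le_antisymm h1 h2)
    intro j; rw [heq]; exact hsignw j
end

section
/- Let p = 2 and let K₁ = [[1, c], [c, 1]] with |c| < 1 (a normalized symmetric positive definite matrix), b ∈ ℝ², and f(β) = ⟨K₁β, β⟩ − 2⟨b, β⟩. Then the set of strict sign patterns realized along the lasso solution path, namely { σ ∈ {−1, 1}² : there exist t > 0 and a minimizer β* of f over B₁(t) with σⱼ·β*ⱼ > 0 for j = 1, 2 }, has cardinality at most 1. Equivalently, in the normalized case with p = 2 the lasso solutions intersect the interior of at most one quadrant, i.e., the point of tangency of the level ellipses with the squares |β₁| + |β₂| = t cannot belong to the interiors of two different edges of the squares. -/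
open Finset Matrix

private lemma eps_trick (L Q ε₀ : ℝ) (hε₀ : 0 < ε₀)
    (h : ∀ ε : ℝ, 0 < ε → ε ≤ ε₀ → 0 ≤ ε * L + ε ^ 2 * Q) : 0 ≤ L := by
  by_contra hL
  push_neg at hL
  have hQ : (0:ℝ) < |Q| + 1 := by positivity
  set ε := min ε₀ (-L / (|Q| + 1)) with hε
  have hεpos : 0 < ε := lt_min hε₀ (div_pos (by linarith) hQ)
  have h1 := h ε hεpos (min_le_left _ _)
  have h2 : ε * Q ≤ ε * |Q| := mul_le_mul_of_nonneg_left (le_abs_self Q) hεpos.le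
  have h3 : ε ≤ -L / (|Q| + 1) := min_le_right _ _
  have h4 : ε * (|Q| + 1) ≤ -L := (le_div_iff₀ hQ).mp h3
  nlinarith [mul_le_mul_of_nonneg_left h4 hεpos.le, mul_le_mul_of_nonneg_left h2 hεpos.le,
    mul_pos hεpos hεpos]

/-- Scalar first-order condition: if `(x,y)` minimizes the quadratic over the ℓ¹-ball
and has strict signs `s₁, s₂`, then for any direction `(d₁,d₂)` with `|dⱼ| ≤ 1` and
`s₁d₁ + s₂d₂ ≤ 0`, the directional derivative is nonnegative. -/
private lemma dir_deriv (c b₁ b₂ t x y s₁ s₂ d₁ d₂ : ℝ)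
    (hs₁ : s₁ = 1 ∨ s₁ = -1) (hs₂ : s₂ = 1 ∨ s₂ = -1)
    (hd₁ : |d₁| ≤ 1) (hd₂ : |d₂| ≤ 1)
    (hdir : s₁ * d₁ + s₂ * d₂ ≤ 0)
    (hx : 0 < s₁ * x) (hy : 0 < s₂ * y)
    (hball : |x| + |y| ≤ t)
    (hmin : ∀ u v : ℝ, |u| + |v| ≤ t →
      (x + c * y) * x + (c * x + y) * y - 2 * (b₁ * x + b₂ * y) ≤
      (u + c * v) * u + (c * u + v) * v - 2 * (b₁ * u + b₂ * v)) :
    0 ≤ (x + c * y - b₁) * d₁ + (c * x + y - b₂) * d₂ := by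
  have hs₁sq : s₁ * s₁ = 1 := by rcases hs₁ with h | h <;> rw [h] <;> ring
  have hs₂sq : s₂ * s₂ = 1 := by rcases hs₂ with h | h <;> rw [h] <;> ring
  have habs₁ : |x| = s₁ * x := by
    rcases hs₁ with h | h <;> rw [h] at hx ⊢ <;> simp at hx ⊢ <;> linarith
  have habs₂ : |y| = s₂ * y := by
    rcases hs₂ with h | h <;> rw [h] at hy ⊢ <;> simp at hy ⊢ <;> linarith
  set ε₀ := min (s₁ * x) (s₂ * y) with hε₀def
  have hε₀ : 0 < ε₀ := lt_min hx hy
  have key : ∀ ε : ℝ, 0 < ε → ε ≤ ε₀ →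
      0 ≤ ε * (2 * ((x + c * y - b₁) * d₁ + (c * x + y - b₂) * d₂)) +
        ε ^ 2 * (d₁ ^ 2 + 2 * c * d₁ * d₂ + d₂ ^ 2) := by
    intro ε hεpos hεle
    have hεx : ε ≤ s₁ * x := le_trans hεle (min_le_left _ _)
    have hεy : ε ≤ s₂ * y := le_trans hεle (min_le_right _ _)
    set u := x + ε * d₁ with hu
    set v := y + ε * d₂ with hv
    have hu0 : 0 ≤ s₁ * u := by
      have : -1 ≤ s₁ * d₁ := by
        rcases hs₁ with h | h <;> rw [h] <;> cases' abs_le.mp hd₁ with h1 h2 <;> linarith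
      rw [hu]; nlinarith
    have hv0 : 0 ≤ s₂ * v := by
      have : -1 ≤ s₂ * d₂ := by
        rcases hs₂ with h | h <;> rw [h] <;> cases' abs_le.mp hd₂ with h1 h2 <;> linarith
      rw [hv]; nlinarith
    have habsu : |u| = s₁ * u := by
      rcases hs₁ with h | h <;> rw [h] at hu0 ⊢ <;> simp at hu0 ⊢ <;> linarith
    have habsv : |v| = s₂ * v := by
      rcases hs₂ with h | h <;> rw [h] at hv0 ⊢ <;> simp at hv0 ⊢ <;> linarith
    have hfeas : |u| + |v| ≤ t := by
      rw [habsu, habsv, hu, hv]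
      have heq : s₁ * (x + ε * d₁) + s₂ * (y + ε * d₂)
          = (s₁ * x + s₂ * y) + ε * (s₁ * d₁ + s₂ * d₂) := by ring
      rw [heq]
      have h1 : ε * (s₁ * d₁ + s₂ * d₂) ≤ 0 :=
        mul_nonpos_of_nonneg_of_nonpos hεpos.le hdir
      rw [habs₁, habs₂] at hball
      linarith
    have hm := hmin u v hfeas
    rw [hu, hv] at hm
    nlinarith [hm]
  have := eps_trick _ _ _ hε₀ key
  linarith

private lemma key_sign (c : ℝ) (hc : |c| < 1) (b₁ b₂ t x y s₁ s₂ : ℝ)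
    (hs₁ : s₁ = 1 ∨ s₁ = -1) (hs₂ : s₂ = 1 ∨ s₂ = -1)
    (hx : 0 < s₁ * x) (hy : 0 < s₂ * y)
    (hball : |x| + |y| ≤ t)
    (hmin : ∀ u v : ℝ, |u| + |v| ≤ t →
      (x + c * y) * x + (c * x + y) * y - 2 * (b₁ * x + b₂ * y) ≤
      (u + c * v) * u + (c * u + v) * v - 2 * (b₁ * u + b₂ * v)) :
    0 < s₁ * (b₁ - c * b₂) ∧ 0 < s₂ * (b₂ - c * b₁) := by
  have hs₁sq : s₁ * s₁ = 1 := by rcases hs₁ with h | h <;> rw [h] <;> ring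
  have hs₂sq : s₂ * s₂ = 1 := by rcases hs₂ with h | h <;> rw [h] <;> ring
  have habs₁ : |s₁| = 1 := by rcases hs₁ with h | h <;> rw [h] <;> simp
  have habs₂ : |s₂| = 1 := by rcases hs₂ with h | h <;> rw [h] <;> simp
  set g₁ := x + c * y - b₁ with hg₁
  set g₂ := c * x + y - b₂ with hg₂
  have h1 : 0 ≤ g₁ * s₁ + g₂ * (-s₂) :=
    dir_deriv c b₁ b₂ t x y s₁ s₂ s₁ (-s₂) hs₁ hs₂ (le_of_eq habs₁)
      (by rw [abs_neg]; exact le_of_eq habs₂) (by nlinarith) hx hy hball hmin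
  have h2 : 0 ≤ g₁ * (-s₁) + g₂ * s₂ :=
    dir_deriv c b₁ b₂ t x y s₁ s₂ (-s₁) s₂ hs₁ hs₂ (by rw [abs_neg]; exact le_of_eq habs₁)
      (le_of_eq habs₂) (by nlinarith) hx hy hball hmin
  have h3 : 0 ≤ g₁ * (-s₁) + g₂ * (-s₂) :=
    dir_deriv c b₁ b₂ t x y s₁ s₂ (-s₁) (-s₂) hs₁ hs₂ (by rw [abs_neg]; exact le_of_eq habs₁)
      (by rw [abs_neg]; exact le_of_eq habs₂) (by nlinarith) hx hy hball hmin
  have heq : g₁ * s₁ = g₂ * s₂ := by linarith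
  have hμ : g₁ * s₁ ≤ 0 := by linarith
  have hcs : c * (s₁ * s₂) < 1 := by
    have habs : |c * (s₁ * s₂)| = |c| := by
      rw [abs_mul, abs_mul, habs₁, habs₂]; ring
    calc c * (s₁ * s₂) ≤ |c * (s₁ * s₂)| := le_abs_self _
      _ = |c| := habs
      _ < 1 := hc
  have hc2 : c ^ 2 < 1 := by nlinarith [abs_nonneg c, sq_abs c, hc]
  constructor
  · have hexp : s₁ * (b₁ - c * b₂) =
        (1 - c ^ 2) * (s₁ * x) + (-(g₁ * s₁)) * (1 - c * (s₁ * s₂)) := by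
      simp only [hg₁, hg₂]
      simp only [hg₁, hg₂] at heq
      linear_combination (-(c * s₁ * s₂)) * heq + (-(c * s₁ * (c * x + y - b₂))) * hs₂sq
    rw [hexp]
    have hnn := mul_nonneg (neg_nonneg.mpr hμ) (by linarith : (0:ℝ) ≤ 1 - c * (s₁ * s₂))
    nlinarith
  · have hμ₂ : g₂ * s₂ ≤ 0 := heq ▸ hμ
    have hexp : s₂ * (b₂ - c * b₁) =
        (1 - c ^ 2) * (s₂ * y) + (-(g₂ * s₂)) * (1 - c * (s₁ * s₂)) := by
      simp only [hg₁, hg₂]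
      simp only [hg₁, hg₂] at heq
      linear_combination (c * s₁ * s₂) * heq + (-(c * s₂ * (x + c * y - b₁))) * hs₁sq
    rw [hexp]
    have hnn := mul_nonneg (neg_nonneg.mpr hμ₂) (by linarith : (0:ℝ) ≤ 1 - c * (s₁ * s₂))
    nlinarith

/-- for `p = 2` and normalized `K₁ = [[1, c], [c, 1]]`, `|c| < 1`, the
lasso solution path realizes at most one strict sign pattern: the lasso solutions
intersect the interior of at most one quadrant. -/
theorem stmt_16 (c : ℝ) (hc : |c| < 1) (b : Fin 2 → ℝ) :
    let K₁ : Matrix (Fin 2) (Fin 2) ℝ := !![1, c; c, 1]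
    Set.ncard {σ : Fin 2 → ℝ | (∀ j, σ j = 1 ∨ σ j = -1) ∧
      ∃ t : ℝ, 0 < t ∧ ∃ βs : Fin 2 → ℝ,
        (∑ j, |βs j| ≤ t) ∧
        (∀ β : Fin 2 → ℝ, ∑ j, |β j| ≤ t →
          (K₁ *ᵥ βs) ⬝ᵥ βs - 2 * (b ⬝ᵥ βs) ≤ (K₁ *ᵥ β) ⬝ᵥ β - 2 * (b ⬝ᵥ β)) ∧
        (∀ j, 0 < σ j * βs j)} ≤ 1 := by
  intro K₁
  set S := {σ : Fin 2 → ℝ | (∀ j, σ j = 1 ∨ σ j = -1) ∧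
      ∃ t : ℝ, 0 < t ∧ ∃ βs : Fin 2 → ℝ,
        (∑ j, |βs j| ≤ t) ∧
        (∀ β : Fin 2 → ℝ, ∑ j, |β j| ≤ t →
          (K₁ *ᵥ βs) ⬝ᵥ βs - 2 * (b ⬝ᵥ βs) ≤ (K₁ *ᵥ β) ⬝ᵥ β - 2 * (b ⬝ᵥ β)) ∧
        (∀ j, 0 < σ j * βs j)} with hS
  have hkey : ∀ σ ∈ S, 0 < σ 0 * (b 0 - c * b 1) ∧ 0 < σ 1 * (b 1 - c * b 0) := by
    intro σ hσ
    obtain ⟨hσpm, t, ht, βs, hball, hmin, hsign⟩ := hσ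
    rw [Fin.sum_univ_two] at hball
    have hmin' : ∀ u v : ℝ, |u| + |v| ≤ t →
        (βs 0 + c * βs 1) * βs 0 + (c * βs 0 + βs 1) * βs 1
          - 2 * (b 0 * βs 0 + b 1 * βs 1) ≤
        (u + c * v) * u + (c * u + v) * v - 2 * (b 0 * u + b 1 * v) := by
      intro u v huv
      have hm := hmin ![u, v] (by rw [Fin.sum_univ_two]; simpa using huv)
      have e1 : (K₁ *ᵥ βs) ⬝ᵥ βs - 2 * (b ⬝ᵥ βs) =
          (βs 0 + c * βs 1) * βs 0 + (c * βs 0 + βs 1) * βs 1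
            - 2 * (b 0 * βs 0 + b 1 * βs 1) := by
        simp [K₁, Matrix.mulVec, dotProduct, Fin.sum_univ_two]
      have e2 : (K₁ *ᵥ ![u, v]) ⬝ᵥ ![u, v] - 2 * (b ⬝ᵥ ![u, v]) =
          (u + c * v) * u + (c * u + v) * v - 2 * (b 0 * u + b 1 * v) := by
        simp [K₁, Matrix.mulVec, dotProduct, Fin.sum_univ_two]
      rw [e1, e2] at hm
      exact hm
    exact key_sign c hc (b 0) (b 1) t (βs 0) (βs 1) (σ 0) (σ 1)
      (hσpm 0) (hσpm 1) (hsign 0) (hsign 1) hball hmin'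
  have hsub : S.Subsingleton := by
    intro σ hσ σ' hσ'
    obtain ⟨h₁, h₂⟩ := hkey σ hσ
    obtain ⟨h₁', h₂'⟩ := hkey σ' hσ'
    have hσpm := hσ.1
    have hσpm' := hσ'.1
    funext j
    fin_cases j
    · show σ 0 = σ' 0
      rcases hσpm 0 with h | h <;> rcases hσpm' 0 with h' | h' <;> rw [h, h'] <;>
        first
          | rfl
          | (exfalso; rw [h] at h₁; rw [h'] at h₁'; linarith)
    · show σ 1 = σ' 1
      rcases hσpm 1 with h | h <;> rcases hσpm' 1 with h' | h' <;> rw [h, h'] <;>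
        first
          | rfl
          | (exfalso; rw [h] at h₂; rw [h'] at h₂'; linarith)
  exact (Set.ncard_le_one_iff hsub.finite).mpr fun ha hb => hsub ha hb
end

section
/- Let p = 3 and let K₁ be a normalized symmetric positive definite real 3×3 matrix (all diagonal entries equal 1), b ∈ ℝ³, and f(β) = ⟨K₁β, β⟩ − 2⟨b, β⟩. Then the set of strict sign patterns realized along the lasso solution path, namely { σ ∈ {−1, 1}³ : there exist t > 0 and a minimizer β* of f over B₁(t) with σⱼ·β*ⱼ > 0 for j = 1, 2, 3 }, has cardinality at most 2. Equivalently, for normalized data with p = 3 the lasso solutions intersect the interiors of at most two octants, i.e., the point of tangency of the level ellipsoids and the octahedra |β₁| + |β₂| + |β₃| = t cannot reach the interiors of more than two different faces of the octahedra. -/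
open Finset Matrix


private lemma eps_le (c D e0 : ℝ) (he0 : 0 < e0)
    (h : ∀ e : ℝ, 0 < e → e ≤ e0 → c ≤ e * D) : c ≤ 0 := by
  rcases le_or_gt D 0 with hD | hD
  · have := h e0 he0 le_rfl
    nlinarith
  · by_contra hc
    push_neg at hc
    have he : 0 < min e0 (c / (2 * D)) := lt_min he0 (by positivity)
    have := h _ he (min_le_left _ _)
    have h2 : min e0 (c / (2 * D)) * D ≤ (c / (2 * D)) * D :=
      mul_le_mul_of_nonneg_right (min_le_right _ _) hD.le
    have h3 : (c / (2 * D)) * D = c / 2 := by field_simp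
    nlinarith

private lemma habs (s x : ℝ) (hs : s = 1 ∨ s = -1) (hx : 0 ≤ s * x) : |x| = s * x := by
  rcases hs with h | h <;> subst h
  · rw [one_mul] at hx ⊢; exact abs_of_nonneg hx
  · have : x ≤ 0 := by nlinarith
    rw [abs_of_nonpos this]; ring

/-- moving mass from coordinate 0 to coordinate 1 shows `g1 ≤ g0`. -/
private lemma kkt_move (A B C b0 b1 b2 t B0 B1 B2 s0 s1 : ℝ)
    (hs0 : s0 = 1 ∨ s0 = -1) (hs1 : s1 = 1 ∨ s1 = -1)
    (hg0 : 0 < s0 * B0) (hg1 : 0 < s1 * B1)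
    (hfeas : |B0| + |B1| + |B2| ≤ t)
    (hmin : ∀ x0 x1 x2 : ℝ, |x0| + |x1| + |x2| ≤ t →
      (B0^2 + B1^2 + B2^2 + 2*A*B0*B1 + 2*B*B0*B2 + 2*C*B1*B2)
        - 2*(b0*B0 + b1*B1 + b2*B2)
      ≤ (x0^2 + x1^2 + x2^2 + 2*A*x0*x1 + 2*B*x0*x2 + 2*C*x1*x2)
        - 2*(b0*x0 + b1*x1 + b2*x2)) :
    s1*(b1 - (A*B0 + B1 + C*B2)) ≤ s0*(b0 - (B0 + A*B1 + B*B2)) := by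
  have hs0' : s0 * s0 = 1 := by rcases hs0 with h | h <;> subst h <;> norm_num
  have hs1' : s1 * s1 = 1 := by rcases hs1 with h | h <;> subst h <;> norm_num
  have a0 : |B0| = s0 * B0 := habs _ _ hs0 hg0.le
  have a1 : |B1| = s1 * B1 := habs _ _ hs1 hg1.le
  have key : s1*(b1 - (A*B0 + B1 + C*B2)) - s0*(b0 - (B0 + A*B1 + B*B2)) ≤ 0 := by
    apply eps_le _ (1 - A*(s0*s1)) (s0*B0) hg0
    intro e he1 he2
    have habs0 : |B0 - e*s0| = s0*B0 - e := by
      have h1 : s0 * (B0 - e*s0) = s0*B0 - e := by linear_combination (-e) * hs0'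
      rw [habs s0 (B0 - e*s0) hs0 (by rw [h1]; linarith), h1]
    have habs1 : |B1 + e*s1| = s1*B1 + e := by
      have h1 : s1 * (B1 + e*s1) = s1*B1 + e := by linear_combination e * hs1'
      rw [habs s1 (B1 + e*s1) hs1 (by rw [h1]; positivity), h1]
    have hf : |B0 - e*s0| + |B1 + e*s1| + |B2| ≤ t := by
      rw [habs0, habs1]; rw [a0, a1] at hfeas; linarith
    have H := hmin (B0 - e*s0) (B1 + e*s1) B2 hf
    have hid : ((B0 - e*s0)^2 + (B1 + e*s1)^2 + B2^2 + 2*A*(B0 - e*s0)*(B1 + e*s1)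
          + 2*B*(B0 - e*s0)*B2 + 2*C*(B1 + e*s1)*B2)
          - 2*(b0*(B0 - e*s0) + b1*(B1 + e*s1) + b2*B2)
        - ((B0^2 + B1^2 + B2^2 + 2*A*B0*B1 + 2*B*B0*B2 + 2*C*B1*B2)
          - 2*(b0*B0 + b1*B1 + b2*B2))
        = 2*e*(s0*(b0 - (B0 + A*B1 + B*B2)) - s1*(b1 - (A*B0 + B1 + C*B2)))
          + e^2*(2 - 2*A*(s0*s1)) := by
      linear_combination e^2*hs0' + e^2*hs1'
    by_contra hcon
    push_neg at hcon
    have h2 := mul_lt_mul_of_pos_left hcon (by linarith : (0:ℝ) < 2*e)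
    linarith [H, hid, h2]
  linarith

/-- shrinking coordinate 0 shows `0 ≤ g0`. -/
private lemma kkt_shrink (A B C b0 b1 b2 t B0 B1 B2 s0 : ℝ)
    (hs0 : s0 = 1 ∨ s0 = -1)
    (hg0 : 0 < s0 * B0)
    (hfeas : |B0| + |B1| + |B2| ≤ t)
    (hmin : ∀ x0 x1 x2 : ℝ, |x0| + |x1| + |x2| ≤ t →
      (B0^2 + B1^2 + B2^2 + 2*A*B0*B1 + 2*B*B0*B2 + 2*C*B1*B2)
        - 2*(b0*B0 + b1*B1 + b2*B2)
      ≤ (x0^2 + x1^2 + x2^2 + 2*A*x0*x1 + 2*B*x0*x2 + 2*C*x1*x2)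
        - 2*(b0*x0 + b1*x1 + b2*x2)) :
    0 ≤ s0*(b0 - (B0 + A*B1 + B*B2)) := by
  have hs0' : s0 * s0 = 1 := by rcases hs0 with h | h <;> subst h <;> norm_num
  have a0 : |B0| = s0 * B0 := habs _ _ hs0 hg0.le
  have key : -(s0*(b0 - (B0 + A*B1 + B*B2))) ≤ 0 := by
    apply eps_le _ (1/2 : ℝ) (s0*B0) hg0
    intro e he1 he2
    have habs0 : |B0 - e*s0| = s0*B0 - e := by
      have h1 : s0 * (B0 - e*s0) = s0*B0 - e := by linear_combination (-e) * hs0'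
      rw [habs s0 (B0 - e*s0) hs0 (by rw [h1]; linarith), h1]
    have hf : |B0 - e*s0| + |B1| + |B2| ≤ t := by
      rw [habs0]; rw [a0] at hfeas; linarith
    have H := hmin (B0 - e*s0) B1 B2 hf
    have hid : ((B0 - e*s0)^2 + B1^2 + B2^2 + 2*A*(B0 - e*s0)*B1
          + 2*B*(B0 - e*s0)*B2 + 2*C*B1*B2)
          - 2*(b0*(B0 - e*s0) + b1*B1 + b2*B2)
        - ((B0^2 + B1^2 + B2^2 + 2*A*B0*B1 + 2*B*B0*B2 + 2*C*B1*B2)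
          - 2*(b0*B0 + b1*B1 + b2*B2))
        = 2*e*(s0*(b0 - (B0 + A*B1 + B*B2))) + e^2 := by
      linear_combination e^2*hs0'
    by_contra hcon
    push_neg at hcon
    have h2 := mul_lt_mul_of_pos_left hcon (by linarith : (0:ℝ) < 2*e)
    linarith [H, hid, h2]
  linarith

set_option maxHeartbeats 1000000

/-- Core contradiction: two realized sign patterns differing in exactly the first two
coordinates (roles), with penalty levels `lam < mu`, is impossible. -/
private lemma core2 (k01 k02 k12 s0 s1 s2 v0 v1 v2 lam mu : ℝ)
    (hs0' : s0*s0 = 1) (hs1' : s1*s1 = 1) (hs2' : s2*s2 = 1)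
    (hP3 : ∀ r0 r1 r2 : ℝ, ¬(r0 = 0 ∧ r1 = 0 ∧ r2 = 0) →
      0 < r0^2 + r1^2 + r2^2 + 2*k01*r0*r1 + 2*k02*r0*r2 + 2*k12*r1*r2)
    (hlam : 0 ≤ lam) (hlm : lam < mu)
    (hv0 : 0 < s0*v0) (hv1 : 0 < s1*v1)
    (row0 : v0 + k01*v1 + k02*v2 = -((mu+lam)*s0))
    (row1 : k01*v0 + v1 + k12*v2 = -((mu+lam)*s1))
    (row2 : k02*v0 + k12*v1 + v2 = (mu-lam)*s2) : False := by
  have ha : 0 < mu + lam := by linarith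
  have hc : 0 < mu - lam := by linarith
  have hac : mu - lam ≤ mu + lam := by linarith
  have hv0ne : v0 ≠ 0 := by rintro rfl; rw [mul_zero] at hv0; exact lt_irrefl 0 hv0
  have hQv : 0 < v0^2+v1^2+v2^2+2*k01*v0*v1+2*k02*v0*v2+2*k12*v1*v2 :=
    hP3 v0 v1 v2 (by tauto)
  have hSeq : v0^2+v1^2+v2^2+2*k01*v0*v1+2*k02*v0*v2+2*k12*v1*v2
      = -((mu+lam)*(s0*v0)) - (mu+lam)*(s1*v1) + (mu-lam)*(s2*v2) := by
    linear_combination v0*row0 + v1*row1 + v2*row2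
  have hS : 0 < -((mu+lam)*(s0*v0)) - (mu+lam)*(s1*v1) + (mu-lam)*(s2*v2) := hSeq ▸ hQv
  have hv2pos : 0 < s2*v2 := by
    by_contra h
    push_neg at h
    linarith [mul_pos ha hv0, mul_pos ha hv1, mul_nonpos_of_nonneg_of_nonpos hc.le h]
  have hv2ne : v2 ≠ 0 := by rintro rfl; rw [mul_zero] at hv2pos; exact lt_irrefl 0 hv2pos
  have hs0ne : s0 ≠ 0 := by rintro rfl; rw [zero_mul] at hv0; exact lt_irrefl 0 hv0
  have hs1ne : s1 ≠ 0 := by rintro rfl; rw [zero_mul] at hv1; exact lt_irrefl 0 hv1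
  have hs2ne : s2 ≠ 0 := by rintro rfl; rw [zero_mul] at hv2pos; exact lt_irrefl 0 hv2pos
  -- off-diagonal bounds
  have hb01 : 0 < 2 - 2*(s0*s1*k01) := by
    have h := hP3 s1 (-s0) 0 (by intro h; exact hs1ne h.1)
    ring_nf at h
    linarith [h, hs0', hs1']
  have hb01' : 0 < 2 + 2*(s0*s1*k01) := by
    have h := hP3 s1 s0 0 (by intro h; exact hs1ne h.1)
    ring_nf at h
    linarith [h, hs0', hs1']
  have hb02' : 0 < 2 + 2*(s0*s2*k02) := by
    have h := hP3 s2 0 s0 (by intro h; exact hs2ne h.1)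
    ring_nf at h
    linarith [h, hs0', hs2']
  have hb12' : 0 < 2 + 2*(s1*s2*k12) := by
    have h := hP3 0 s2 s1 (by intro h; exact hs2ne h.2.1)
    ring_nf at h
    linarith [h, hs1', hs2']
  -- row-2 bound: s2*v2 < (mu-lam) + s0*v0 + s1*v1
  have e1 : s2*v2 = (mu-lam) - s2*(k02*v0) - s2*(k12*v1) := by
    linear_combination s2*row2 + (mu-lam)*hs2'
  have e2id : (s0*v0)*(2+2*(s0*s2*k02)) = 2*(s0*v0) + 2*(s2*(k02*v0)) := by
    linear_combination (2*(s2*(k02*v0)))*hs0'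
  have e2 : 0 < 2*(s0*v0) + 2*(s2*(k02*v0)) := e2id ▸ mul_pos hv0 hb02'
  have e3id : (s1*v1)*(2+2*(s1*s2*k12)) = 2*(s1*v1) + 2*(s2*(k12*v1)) := by
    linear_combination (2*(s2*(k12*v1)))*hs1'
  have e3 : 0 < 2*(s1*v1) + 2*(s2*(k12*v1)) := e3id ▸ mul_pos hv1 hb12'
  have hrow2b : s2*v2 < (mu-lam) + s0*v0 + s1*v1 := by linarith
  -- Cauchy–Schwarz step with y = (s0,s1,0)
  have hBvy : s0*(v0 + k01*v1 + k02*v2) + s1*(k01*v0 + v1 + k12*v2) = -(2*(mu+lam)) := by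
    rw [row0, row1]; linear_combination (-(mu+lam))*hs0' + (-(mu+lam))*hs1'
  have hz : 0 < ((2+2*(s0*s1*k01))*v0 + 2*(mu+lam)*s0)^2
      + ((2+2*(s0*s1*k01))*v1 + 2*(mu+lam)*s1)^2 + ((2+2*(s0*s1*k01))*v2)^2
      + 2*k01*((2+2*(s0*s1*k01))*v0 + 2*(mu+lam)*s0)*((2+2*(s0*s1*k01))*v1 + 2*(mu+lam)*s1)
      + 2*k02*((2+2*(s0*s1*k01))*v0 + 2*(mu+lam)*s0)*((2+2*(s0*s1*k01))*v2)
      + 2*k12*((2+2*(s0*s1*k01))*v1 + 2*(mu+lam)*s1)*((2+2*(s0*s1*k01))*v2) := by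
    apply hP3
    intro h
    have h2 : (2+2*(s0*s1*k01)) * v2 = 0 := h.2.2
    rcases mul_eq_zero.1 h2 with h3 | h3
    · linarith
    · exact hv2ne h3
  have hq1 : ((2+2*(s0*s1*k01))*v0 + 2*(mu+lam)*s0)^2
      + ((2+2*(s0*s1*k01))*v1 + 2*(mu+lam)*s1)^2 + ((2+2*(s0*s1*k01))*v2)^2
      + 2*k01*((2+2*(s0*s1*k01))*v0 + 2*(mu+lam)*s0)*((2+2*(s0*s1*k01))*v1 + 2*(mu+lam)*s1)
      + 2*k02*((2+2*(s0*s1*k01))*v0 + 2*(mu+lam)*s0)*((2+2*(s0*s1*k01))*v2)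
      + 2*k12*((2+2*(s0*s1*k01))*v1 + 2*(mu+lam)*s1)*((2+2*(s0*s1*k01))*v2)
      = (2+2*(s0*s1*k01))^2*(v0^2+v1^2+v2^2+2*k01*v0*v1+2*k02*v0*v2+2*k12*v1*v2)
        + (2*(mu+lam))^2*(s0*s0+s1*s1+2*k01*(s0*s1))
        + 2*(2+2*(s0*s1*k01))*(2*(mu+lam))*(s0*(v0 + k01*v1 + k02*v2) + s1*(k01*v0 + v1 + k12*v2)) := by
    ring
  have hq2 : s0*s0+s1*s1+2*k01*(s0*s1) = 2+2*(s0*s1*k01) := by linarith [hs0', hs1']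
  rw [hq2, hBvy] at hq1
  rw [hq1] at hz
  have hEpos : 0 < 2+2*(s0*s1*k01) := hb01'
  have hE4 : 2+2*(s0*s1*k01) < 4 := by linarith
  have hcs : 4*(mu+lam)^2 < (2+2*(s0*s1*k01)) *
      (v0^2+v1^2+v2^2+2*k01*v0*v1+2*k02*v0*v2+2*k12*v1*v2) := by
    by_contra h
    push_neg at h
    have h2 := mul_le_mul_of_nonneg_left h hEpos.le
    linarith [h2, hz]
  have hQva : (mu+lam)^2 < v0^2+v1^2+v2^2+2*k01*v0*v1+2*k02*v0*v2+2*k12*v1*v2 := by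
    linarith [hcs, mul_nonneg (by linarith : (0:ℝ) ≤ 4 - (2+2*(s0*s1*k01))) hQv.le]
  -- final chain
  have hP : 0 < s0*v0 + s1*v1 := by linarith
  have l2 : (mu-lam)*(s2*v2) < (mu-lam)*((mu-lam) + s0*v0 + s1*v1) :=
    mul_lt_mul_of_pos_left hrow2b hc
  have l3 : ((mu-lam) - (mu+lam))*(s0*v0 + s1*v1) ≤ 0 :=
    mul_nonpos_of_nonpos_of_nonneg (by linarith) hP.le
  have hfin : (mu+lam)^2 < (mu-lam)^2 := by linarith [hQva, hSeq, l2, l3]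
  have hsq : (mu-lam)*(mu-lam) ≤ (mu+lam)*(mu+lam) := mul_le_mul hac hac hc.le (by linarith)
  linarith [hfin, hsq]

/-- Core contradiction: two antipodal realized sign patterns are impossible. -/
private lemma core3 (k01 k02 k12 s0 s1 s2 v0 v1 v2 lam mu : ℝ)
    (hP3 : ∀ r0 r1 r2 : ℝ, ¬(r0 = 0 ∧ r1 = 0 ∧ r2 = 0) →
      0 < r0^2 + r1^2 + r2^2 + 2*k01*r0*r1 + 2*k02*r0*r2 + 2*k12*r1*r2)
    (hlam : 0 ≤ lam) (hlm : lam < mu)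
    (hv0 : 0 < s0*v0) (hv1 : 0 < s1*v1) (hv2 : 0 < s2*v2)
    (row0 : v0 + k01*v1 + k02*v2 = -((mu+lam)*s0))
    (row1 : k01*v0 + v1 + k12*v2 = -((mu+lam)*s1))
    (row2 : k02*v0 + k12*v1 + v2 = -((mu+lam)*s2)) : False := by
  have ha : 0 < mu + lam := by linarith
  have hv0ne : v0 ≠ 0 := by rintro rfl; rw [mul_zero] at hv0; exact lt_irrefl 0 hv0
  have hQv : 0 < v0^2+v1^2+v2^2+2*k01*v0*v1+2*k02*v0*v2+2*k12*v1*v2 :=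
    hP3 v0 v1 v2 (by tauto)
  have hSeq : v0^2+v1^2+v2^2+2*k01*v0*v1+2*k02*v0*v2+2*k12*v1*v2
      = -((mu+lam)*(s0*v0)) - (mu+lam)*(s1*v1) - (mu+lam)*(s2*v2) := by
    linear_combination v0*row0 + v1*row1 + v2*row2
  linarith [hQv, hSeq, mul_pos ha hv0, mul_pos ha hv1, mul_pos ha hv2]

set_option maxHeartbeats 4000000

private lemma pair_lt (A B C : ℝ)
    (hP3 : ∀ r0 r1 r2 : ℝ, ¬(r0 = 0 ∧ r1 = 0 ∧ r2 = 0) →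
      0 < r0^2 + r1^2 + r2^2 + 2*A*r0*r1 + 2*B*r0*r2 + 2*C*r1*r2)
    (b0 b1 b2 s0 s1 s2 t0 t1 t2 lam mu B0 B1 B2 G0 G1 G2 : ℝ)
    (hs0 : s0 = 1 ∨ s0 = -1) (hs1 : s1 = 1 ∨ s1 = -1) (hs2 : s2 = 1 ∨ s2 = -1)
    (ht0 : t0 = 1 ∨ t0 = -1) (ht1 : t1 = 1 ∨ t1 = -1) (ht2 : t2 = 1 ∨ t2 = -1)
    (hlam : 0 ≤ lam) (hlt : lam < mu)
    (hB0 : 0 < s0*B0) (hB1 : 0 < s1*B1) (hB2 : 0 < s2*B2)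
    (hG0 : 0 < t0*G0) (hG1 : 0 < t1*G1) (hG2 : 0 < t2*G2)
    (rB0 : b0 - (B0 + A*B1 + B*B2) = lam*s0)
    (rB1 : b1 - (A*B0 + B1 + C*B2) = lam*s1)
    (rB2 : b2 - (B*B0 + C*B1 + B2) = lam*s2)
    (rG0 : b0 - (G0 + A*G1 + B*G2) = mu*t0)
    (rG1 : b1 - (A*G0 + G1 + C*G2) = mu*t1)
    (rG2 : b2 - (B*G0 + C*G1 + G2) = mu*t2)
    (hne : ¬(s0 = t0 ∧ s1 = t1 ∧ s2 = t2)) :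
    (s0 ≠ t0 ∧ s1 = t1 ∧ s2 = t2) ∨ (s0 = t0 ∧ s1 ≠ t1 ∧ s2 = t2) ∨
      (s0 = t0 ∧ s1 = t1 ∧ s2 ≠ t2) := by
  have hs0' : s0 * s0 = 1 := by rcases hs0 with h | h <;> subst h <;> norm_num
  have hs1' : s1 * s1 = 1 := by rcases hs1 with h | h <;> subst h <;> norm_num
  have hs2' : s2 * s2 = 1 := by rcases hs2 with h | h <;> subst h <;> norm_num
  have d0 : s0 = t0 ∨ s0 = -t0 := by
    rcases hs0 with h | h <;> rcases ht0 with g | g <;> rw [h, g] <;> norm_num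
  have d1 : s1 = t1 ∨ s1 = -t1 := by
    rcases hs1 with h | h <;> rcases ht1 with g | g <;> rw [h, g] <;> norm_num
  have d2 : s2 = t2 ∨ s2 = -t2 := by
    rcases hs2 with h | h <;> rcases ht2 with g | g <;> rw [h, g] <;> norm_num
  by_cases h0 : s0 = t0 <;> by_cases h1 : s1 = t1 <;> by_cases h2 : s2 = t2
  · exact absurd ⟨h0, h1, h2⟩ hne
  · exact Or.inr (Or.inr ⟨h0, h1, h2⟩)
  · exact Or.inr (Or.inl ⟨h0, h1, h2⟩)
  · -- s0 = t0, s1 ≠ t1, s2 ≠ t2 : differ at coords 1,2; roles (1,2,0)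
    exfalso
    have n1 : s1 = -t1 := d1.resolve_left h1
    have n2 : s2 = -t2 := d2.resolve_left h2
    have hv1 : 0 < s1*(B1 - G1) := by
      have e : s1*G1 = -(t1*G1) := by rw [n1]; ring
      have : s1*(B1-G1) = s1*B1 - s1*G1 := by ring
      rw [this, e]; linarith
    have hv2 : 0 < s2*(B2 - G2) := by
      have e : s2*G2 = -(t2*G2) := by rw [n2]; ring
      have : s2*(B2-G2) = s2*B2 - s2*G2 := by ring
      rw [this, e]; linarith
    have hP3' : ∀ r0 r1 r2 : ℝ, ¬(r0 = 0 ∧ r1 = 0 ∧ r2 = 0) →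
        0 < r0^2 + r1^2 + r2^2 + 2*C*r0*r1 + 2*A*r0*r2 + 2*B*r1*r2 := by
      intro r0 r1 r2 hr
      have h := hP3 r2 r0 r1 (fun hh => hr ⟨hh.2.1, hh.2.2, hh.1⟩)
      exact lt_of_lt_of_eq h (by ring)
    refine core2 C A B s1 s2 s0 (B1-G1) (B2-G2) (B0-G0) lam mu hs1' hs2' hs0' hP3' hlam hlt
      hv1 hv2 ?_ ?_ ?_
    · linear_combination rG1 - rB1 + mu*n1
    · linear_combination rG2 - rB2 + mu*n2
    · linear_combination rG0 - rB0 - mu*h0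
  · -- s0 ≠ t0, s1 = t1, s2 = t2
    exact Or.inl ⟨h0, h1, h2⟩
  · -- s0 ≠ t0, s1 = t1, s2 ≠ t2 : differ at coords 0,2; roles (0,2,1)
    exfalso
    have n0 : s0 = -t0 := d0.resolve_left h0
    have n2 : s2 = -t2 := d2.resolve_left h2
    have hv0 : 0 < s0*(B0 - G0) := by
      have e : s0*G0 = -(t0*G0) := by rw [n0]; ring
      have : s0*(B0-G0) = s0*B0 - s0*G0 := by ring
      rw [this, e]; linarith
    have hv2 : 0 < s2*(B2 - G2) := by
      have e : s2*G2 = -(t2*G2) := by rw [n2]; ring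
      have : s2*(B2-G2) = s2*B2 - s2*G2 := by ring
      rw [this, e]; linarith
    have hP3' : ∀ r0 r1 r2 : ℝ, ¬(r0 = 0 ∧ r1 = 0 ∧ r2 = 0) →
        0 < r0^2 + r1^2 + r2^2 + 2*B*r0*r1 + 2*A*r0*r2 + 2*C*r1*r2 := by
      intro r0 r1 r2 hr
      have h := hP3 r0 r2 r1 (fun hh => hr ⟨hh.1, hh.2.2, hh.2.1⟩)
      exact lt_of_lt_of_eq h (by ring)
    refine core2 B A C s0 s2 s1 (B0-G0) (B2-G2) (B1-G1) lam mu hs0' hs2' hs1' hP3' hlam hlt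
      hv0 hv2 ?_ ?_ ?_
    · linear_combination rG0 - rB0 + mu*n0
    · linear_combination rG2 - rB2 + mu*n2
    · linear_combination rG1 - rB1 - mu*h1
  · -- s0 ≠ t0, s1 ≠ t1, s2 = t2 : differ at coords 0,1; natural roles
    exfalso
    have n0 : s0 = -t0 := d0.resolve_left h0
    have n1 : s1 = -t1 := d1.resolve_left h1
    have hv0 : 0 < s0*(B0 - G0) := by
      have e : s0*G0 = -(t0*G0) := by rw [n0]; ring
      have : s0*(B0-G0) = s0*B0 - s0*G0 := by ring
      rw [this, e]; linarith
    have hv1 : 0 < s1*(B1 - G1) := by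
      have e : s1*G1 = -(t1*G1) := by rw [n1]; ring
      have : s1*(B1-G1) = s1*B1 - s1*G1 := by ring
      rw [this, e]; linarith
    refine core2 A B C s0 s1 s2 (B0-G0) (B1-G1) (B2-G2) lam mu hs0' hs1' hs2' hP3 hlam hlt
      hv0 hv1 ?_ ?_ ?_
    · linear_combination rG0 - rB0 + mu*n0
    · linear_combination rG1 - rB1 + mu*n1
    · linear_combination rG2 - rB2 - mu*h2
  · -- all differ: antipodal
    exfalso
    have n0 : s0 = -t0 := d0.resolve_left h0
    have n1 : s1 = -t1 := d1.resolve_left h1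
    have n2 : s2 = -t2 := d2.resolve_left h2
    have hv0 : 0 < s0*(B0 - G0) := by
      have e : s0*G0 = -(t0*G0) := by rw [n0]; ring
      have : s0*(B0-G0) = s0*B0 - s0*G0 := by ring
      rw [this, e]; linarith
    have hv1 : 0 < s1*(B1 - G1) := by
      have e : s1*G1 = -(t1*G1) := by rw [n1]; ring
      have : s1*(B1-G1) = s1*B1 - s1*G1 := by ring
      rw [this, e]; linarith
    have hv2 : 0 < s2*(B2 - G2) := by
      have e : s2*G2 = -(t2*G2) := by rw [n2]; ring
      have : s2*(B2-G2) = s2*B2 - s2*G2 := by ring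
      rw [this, e]; linarith
    refine core3 A B C s0 s1 s2 (B0-G0) (B1-G1) (B2-G2) lam mu hP3 hlam hlt hv0 hv1 hv2
      ?_ ?_ ?_
    · linear_combination rG0 - rB0 + mu*n0
    · linear_combination rG1 - rB1 + mu*n1
    · linear_combination rG2 - rB2 + mu*n2

private lemma pair_scalar (A B C : ℝ)
    (hP3 : ∀ r0 r1 r2 : ℝ, ¬(r0 = 0 ∧ r1 = 0 ∧ r2 = 0) →
      0 < r0^2 + r1^2 + r2^2 + 2*A*r0*r1 + 2*B*r0*r2 + 2*C*r1*r2)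
    (b0 b1 b2 s0 s1 s2 t0 t1 t2 lam mu B0 B1 B2 G0 G1 G2 : ℝ)
    (hs0 : s0 = 1 ∨ s0 = -1) (hs1 : s1 = 1 ∨ s1 = -1) (hs2 : s2 = 1 ∨ s2 = -1)
    (ht0 : t0 = 1 ∨ t0 = -1) (ht1 : t1 = 1 ∨ t1 = -1) (ht2 : t2 = 1 ∨ t2 = -1)
    (hlam : 0 ≤ lam) (hmu : 0 ≤ mu)
    (hB0 : 0 < s0*B0) (hB1 : 0 < s1*B1) (hB2 : 0 < s2*B2)
    (hG0 : 0 < t0*G0) (hG1 : 0 < t1*G1) (hG2 : 0 < t2*G2)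
    (rB0 : b0 - (B0 + A*B1 + B*B2) = lam*s0)
    (rB1 : b1 - (A*B0 + B1 + C*B2) = lam*s1)
    (rB2 : b2 - (B*B0 + C*B1 + B2) = lam*s2)
    (rG0 : b0 - (G0 + A*G1 + B*G2) = mu*t0)
    (rG1 : b1 - (A*G0 + G1 + C*G2) = mu*t1)
    (rG2 : b2 - (B*G0 + C*G1 + G2) = mu*t2)
    (hne : ¬(s0 = t0 ∧ s1 = t1 ∧ s2 = t2)) :
    (s0 ≠ t0 ∧ s1 = t1 ∧ s2 = t2) ∨ (s0 = t0 ∧ s1 ≠ t1 ∧ s2 = t2) ∨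
      (s0 = t0 ∧ s1 = t1 ∧ s2 ≠ t2) := by
  rcases lt_trichotomy lam mu with hlt | heq | hgt
  · exact pair_lt A B C hP3 b0 b1 b2 s0 s1 s2 t0 t1 t2 lam mu B0 B1 B2 G0 G1 G2
      hs0 hs1 hs2 ht0 ht1 ht2 hlam hlt hB0 hB1 hB2 hG0 hG1 hG2
      rB0 rB1 rB2 rG0 rG1 rG2 hne
  · -- equal penalties: unique minimizer forces σ = τ, contradiction with hne
    exfalso
    subst heq
    have d0 : s0 = t0 ∨ s0 = -t0 := by
      rcases hs0 with h | h <;> rcases ht0 with g | g <;> rw [h, g] <;> norm_num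
    have d1 : s1 = t1 ∨ s1 = -t1 := by
      rcases hs1 with h | h <;> rcases ht1 with g | g <;> rw [h, g] <;> norm_num
    have d2 : s2 = t2 ∨ s2 = -t2 := by
      rcases hs2 with h | h <;> rcases ht2 with g | g <;> rw [h, g] <;> norm_num
    have m0 : (t0 - s0)*(B0 - G0) ≤ 0 := by
      rcases d0 with h | h
      · rw [h]; ring_nf; simp
      · have e1 : t0*B0 = -(s0*B0) := by rw [h]; ring
        have e2 : t0*G0 = -(s0*G0) := by rw [h]; ring
        have e3 : s0*G0 = -(t0*G0) := by rw [h]; ring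
        nlinarith [hB0, hG0]
    have m1 : (t1 - s1)*(B1 - G1) ≤ 0 := by
      rcases d1 with h | h
      · rw [h]; ring_nf; simp
      · have e1 : t1*B1 = -(s1*B1) := by rw [h]; ring
        have e3 : s1*G1 = -(t1*G1) := by rw [h]; ring
        nlinarith [hB1, hG1]
    have m2 : (t2 - s2)*(B2 - G2) ≤ 0 := by
      rcases d2 with h | h
      · rw [h]; ring_nf; simp
      · have e1 : t2*B2 = -(s2*B2) := by rw [h]; ring
        have e3 : s2*G2 = -(t2*G2) := by rw [h]; ring
        nlinarith [hB2, hG2]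
    have hSeq : (B0-G0)^2 + (B1-G1)^2 + (B2-G2)^2 + 2*A*(B0-G0)*(B1-G1)
        + 2*B*(B0-G0)*(B2-G2) + 2*C*(B1-G1)*(B2-G2)
        = lam*((t0-s0)*(B0-G0)) + lam*((t1-s1)*(B1-G1)) + lam*((t2-s2)*(B2-G2)) := by
      linear_combination (G0-B0)*rB0 + (B0-G0)*rG0 + (G1-B1)*rB1 + (B1-G1)*rG1
        + (G2-B2)*rB2 + (B2-G2)*rG2
    have hQle : (B0-G0)^2 + (B1-G1)^2 + (B2-G2)^2 + 2*A*(B0-G0)*(B1-G1)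
        + 2*B*(B0-G0)*(B2-G2) + 2*C*(B1-G1)*(B2-G2) ≤ 0 := by
      rw [hSeq]
      have := mul_nonpos_of_nonneg_of_nonpos hlam m0
      have := mul_nonpos_of_nonneg_of_nonpos hlam m1
      have := mul_nonpos_of_nonneg_of_nonpos hlam m2
      linarith
    have hall : (B0-G0) = 0 ∧ (B1-G1) = 0 ∧ (B2-G2) = 0 := by
      by_contra h
      exact absurd (hP3 _ _ _ h) (by linarith)
    obtain ⟨z0, z1, z2⟩ := hall
    have eB0 : B0 = G0 := by linarith
    have eB1 : B1 = G1 := by linarith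
    have eB2 : B2 = G2 := by linarith
    apply hne
    refine ⟨?_, ?_, ?_⟩
    · rcases hs0 with h | h <;> rcases ht0 with g | g <;> rw [h, g] <;>
        (exfalso; rw [h] at hB0; rw [g, ← eB0] at hG0; linarith)
    · rcases hs1 with h | h <;> rcases ht1 with g | g <;> rw [h, g] <;>
        (exfalso; rw [h] at hB1; rw [g, ← eB1] at hG1; linarith)
    · rcases hs2 with h | h <;> rcases ht2 with g | g <;> rw [h, g] <;>
        (exfalso; rw [h] at hB2; rw [g, ← eB2] at hG2; linarith)
  · -- mu < lam : symmetric
    have h := pair_lt A B C hP3 b0 b1 b2 t0 t1 t2 s0 s1 s2 mu lam G0 G1 G2 B0 B1 B2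
      ht0 ht1 ht2 hs0 hs1 hs2 hmu hgt hG0 hG1 hG2 hB0 hB1 hB2
      rG0 rG1 rG2 rB0 rB1 rB2 (fun hh => hne ⟨hh.1.symm, hh.2.1.symm, hh.2.2.symm⟩)
    rcases h with ⟨a, b, c⟩ | ⟨a, b, c⟩ | ⟨a, b, c⟩
    · exact Or.inl ⟨fun he => a he.symm, b.symm, c.symm⟩
    · exact Or.inr (Or.inl ⟨a.symm, fun he => b he.symm, c.symm⟩)
    · exact Or.inr (Or.inr ⟨a.symm, b.symm, fun he => c he.symm⟩)

set_option maxHeartbeats 1000000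

private lemma kkt (A B C b0 b1 b2 t B0 B1 B2 s0 s1 s2 : ℝ)
    (hs0 : s0 = 1 ∨ s0 = -1) (hs1 : s1 = 1 ∨ s1 = -1) (hs2 : s2 = 1 ∨ s2 = -1)
    (hg0 : 0 < s0 * B0) (hg1 : 0 < s1 * B1) (hg2 : 0 < s2 * B2)
    (hfeas : |B0| + |B1| + |B2| ≤ t)
    (hmin : ∀ x0 x1 x2 : ℝ, |x0| + |x1| + |x2| ≤ t →
      (B0^2 + B1^2 + B2^2 + 2*A*B0*B1 + 2*B*B0*B2 + 2*C*B1*B2)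
        - 2*(b0*B0 + b1*B1 + b2*B2)
      ≤ (x0^2 + x1^2 + x2^2 + 2*A*x0*x1 + 2*B*x0*x2 + 2*C*x1*x2)
        - 2*(b0*x0 + b1*x1 + b2*x2)) :
    ∃ l : ℝ, 0 ≤ l ∧ b0 - (B0 + A*B1 + B*B2) = l * s0 ∧
      b1 - (A*B0 + B1 + C*B2) = l * s1 ∧ b2 - (B*B0 + C*B1 + B2) = l * s2 := by
  have hs0' : s0 * s0 = 1 := by rcases hs0 with h | h <;> subst h <;> norm_num
  have hs1' : s1 * s1 = 1 := by rcases hs1 with h | h <;> subst h <;> norm_num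
  have hs2' : s2 * s2 = 1 := by rcases hs2 with h | h <;> subst h <;> norm_num
  have hmin10 : ∀ x0 x1 x2 : ℝ, |x0| + |x1| + |x2| ≤ t →
      (B1^2 + B0^2 + B2^2 + 2*A*B1*B0 + 2*C*B1*B2 + 2*B*B0*B2)
        - 2*(b1*B1 + b0*B0 + b2*B2)
      ≤ (x0^2 + x1^2 + x2^2 + 2*A*x0*x1 + 2*C*x0*x2 + 2*B*x1*x2)
        - 2*(b1*x0 + b0*x1 + b2*x2) := by
    intro x0 x1 x2 hx
    have h := hmin x1 x0 x2 (by linarith)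
    linarith [h]
  have hmin12 : ∀ x0 x1 x2 : ℝ, |x0| + |x1| + |x2| ≤ t →
      (B1^2 + B2^2 + B0^2 + 2*C*B1*B2 + 2*A*B1*B0 + 2*B*B2*B0)
        - 2*(b1*B1 + b2*B2 + b0*B0)
      ≤ (x0^2 + x1^2 + x2^2 + 2*C*x0*x1 + 2*A*x0*x2 + 2*B*x1*x2)
        - 2*(b1*x0 + b2*x1 + b0*x2) := by
    intro x0 x1 x2 hx
    have h := hmin x2 x0 x1 (by linarith)
    linarith [h]
  have hmin21 : ∀ x0 x1 x2 : ℝ, |x0| + |x1| + |x2| ≤ t →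
      (B2^2 + B1^2 + B0^2 + 2*C*B2*B1 + 2*B*B2*B0 + 2*A*B1*B0)
        - 2*(b2*B2 + b1*B1 + b0*B0)
      ≤ (x0^2 + x1^2 + x2^2 + 2*C*x0*x1 + 2*B*x0*x2 + 2*A*x1*x2)
        - 2*(b2*x0 + b1*x1 + b0*x2) := by
    intro x0 x1 x2 hx
    have h := hmin x2 x1 x0 (by linarith)
    linarith [h]
  have m01 := kkt_move A B C b0 b1 b2 t B0 B1 B2 s0 s1 hs0 hs1 hg0 hg1 hfeas hmin
  have m10 := kkt_move A C B b1 b0 b2 t B1 B0 B2 s1 s0 hs1 hs0 hg1 hg0 (by linarith) hmin10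
  have m12 := kkt_move C A B b1 b2 b0 t B1 B2 B0 s1 s2 hs1 hs2 hg1 hg2 (by linarith) hmin12
  have m21 := kkt_move C B A b2 b1 b0 t B2 B1 B0 s2 s1 hs2 hs1 hg2 hg1 (by linarith) hmin21
  have sh0 := kkt_shrink A B C b0 b1 b2 t B0 B1 B2 s0 hs0 hg0 hfeas hmin
  have e01 : s1*(b1 - (A*B0 + B1 + C*B2)) = s0*(b0 - (B0 + A*B1 + B*B2)) :=
    le_antisymm m01 (by linarith [m10])
  have e21 : s2*(b2 - (B*B0 + C*B1 + B2)) = s1*(b1 - (A*B0 + B1 + C*B2)) :=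
    le_antisymm (by linarith [m12]) (by linarith [m21])
  refine ⟨s0*(b0 - (B0 + A*B1 + B*B2)), sh0, ?_, ?_, ?_⟩
  · linear_combination (-(b0 - (B0 + A*B1 + B*B2)))*hs0'
  · linear_combination s1*e01 - (b1 - (A*B0 + B1 + C*B2))*hs1'
  · linear_combination s2*(e21.trans e01) - (b2 - (B*B0 + C*B1 + B2))*hs2'

set_option maxHeartbeats 4000000 in
private lemma parity (s0 s1 s2 t0 t1 t2 r0 r1 r2 : ℝ)
    (hs0 : s0 = 1 ∨ s0 = -1) (hs1 : s1 = 1 ∨ s1 = -1) (hs2 : s2 = 1 ∨ s2 = -1)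
    (ht0 : t0 = 1 ∨ t0 = -1) (ht1 : t1 = 1 ∨ t1 = -1) (ht2 : t2 = 1 ∨ t2 = -1)
    (hr0 : r0 = 1 ∨ r0 = -1) (hr1 : r1 = 1 ∨ r1 = -1) (hr2 : r2 = 1 ∨ r2 = -1)
    (p1 : (s0 ≠ t0 ∧ s1 = t1 ∧ s2 = t2) ∨ (s0 = t0 ∧ s1 ≠ t1 ∧ s2 = t2) ∨
      (s0 = t0 ∧ s1 = t1 ∧ s2 ≠ t2))
    (p2 : (s0 ≠ r0 ∧ s1 = r1 ∧ s2 = r2) ∨ (s0 = r0 ∧ s1 ≠ r1 ∧ s2 = r2) ∨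
      (s0 = r0 ∧ s1 = r1 ∧ s2 ≠ r2))
    (p3 : (t0 ≠ r0 ∧ t1 = r1 ∧ t2 = r2) ∨ (t0 = r0 ∧ t1 ≠ r1 ∧ t2 = r2) ∨
      (t0 = r0 ∧ t1 = r1 ∧ t2 ≠ r2)) : False := by
  rcases hs0 with rfl | rfl <;> rcases hs1 with rfl | rfl <;> rcases hs2 with rfl | rfl <;>
    rcases ht0 with rfl | rfl <;> rcases ht1 with rfl | rfl <;> rcases ht2 with rfl | rfl <;>
    rcases hr0 with rfl | rfl <;> rcases hr1 with rfl | rfl <;> rcases hr2 with rfl | rfl <;>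
    (revert p1 p2 p3; norm_num)

set_option maxHeartbeats 1000000

/-- for `p = 3` and a normalized symmetric positive definite covariance
matrix (all diagonal entries equal `1`), the lasso solution path realizes at most two
strict sign patterns: the lasso solutions intersect the interiors of at most two
octants. -/
theorem stmt_17 (K₁ : Matrix (Fin 3) (Fin 3) ℝ) (hsymm : K₁.IsSymm)
    (hpos : ∀ v : Fin 3 → ℝ, v ≠ 0 → 0 < (K₁ *ᵥ v) ⬝ᵥ v)
    (hnorm : ∀ i, K₁ i i = 1)
    (b : Fin 3 → ℝ) :
    Set.ncard {σ : Fin 3 → ℝ | (∀ j, σ j = 1 ∨ σ j = -1) ∧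
      ∃ t : ℝ, 0 < t ∧ ∃ βs : Fin 3 → ℝ,
        (∑ j, |βs j| ≤ t) ∧
        (∀ β : Fin 3 → ℝ, ∑ j, |β j| ≤ t →
          (K₁ *ᵥ βs) ⬝ᵥ βs - 2 * (b ⬝ᵥ βs) ≤ (K₁ *ᵥ β) ⬝ᵥ β - 2 * (b ⬝ᵥ β)) ∧
        (∀ j, 0 < σ j * βs j)} ≤ 2 := by
  classical
  set A := K₁ 0 1 with hA
  set B := K₁ 0 2 with hB
  set C := K₁ 1 2 with hC
  have k10 : K₁ 1 0 = A := hsymm.apply 0 1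
  have k20 : K₁ 2 0 = B := hsymm.apply 0 2
  have k21 : K₁ 2 1 = C := hsymm.apply 1 2
  have qval : ∀ x : Fin 3 → ℝ, (K₁ *ᵥ x) ⬝ᵥ x
      = (x 0)^2 + (x 1)^2 + (x 2)^2 + 2*A*(x 0)*(x 1) + 2*B*(x 0)*(x 2) + 2*C*(x 1)*(x 2) := by
    intro x
    have expand : (K₁ *ᵥ x) ⬝ᵥ x
        = (K₁ 0 0 * x 0 + K₁ 0 1 * x 1 + K₁ 0 2 * x 2) * x 0
        + (K₁ 1 0 * x 0 + K₁ 1 1 * x 1 + K₁ 1 2 * x 2) * x 1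
        + (K₁ 2 0 * x 0 + K₁ 2 1 * x 1 + K₁ 2 2 * x 2) * x 2 := by
      simp [Matrix.mulVec, dotProduct, Fin.sum_univ_three]
    rw [expand, hnorm 0, hnorm 1, hnorm 2, k10, k20, k21, ← hA, ← hB, ← hC]
    ring
  have bval : ∀ x : Fin 3 → ℝ, b ⬝ᵥ x = b 0 * x 0 + b 1 * x 1 + b 2 * x 2 := by
    intro x
    simp [dotProduct, Fin.sum_univ_three]
  have P3 : ∀ r0 r1 r2 : ℝ, ¬(r0 = 0 ∧ r1 = 0 ∧ r2 = 0) →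
      0 < r0^2 + r1^2 + r2^2 + 2*A*r0*r1 + 2*B*r0*r2 + 2*C*r1*r2 := by
    intro r0 r1 r2 hr
    have hne : (![r0, r1, r2] : Fin 3 → ℝ) ≠ 0 := by
      intro hc
      exact hr ⟨by simpa using congrFun hc 0, by simpa using congrFun hc 1,
        by simpa using congrFun hc 2⟩
    have h := hpos ![r0, r1, r2] hne
    rw [qval] at h
    simpa using h
  have member_rows : ∀ σ : Fin 3 → ℝ, σ ∈ {σ : Fin 3 → ℝ | (∀ j, σ j = 1 ∨ σ j = -1) ∧
      ∃ t : ℝ, 0 < t ∧ ∃ βs : Fin 3 → ℝ,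
        (∑ j, |βs j| ≤ t) ∧
        (∀ β : Fin 3 → ℝ, ∑ j, |β j| ≤ t →
          (K₁ *ᵥ βs) ⬝ᵥ βs - 2 * (b ⬝ᵥ βs) ≤ (K₁ *ᵥ β) ⬝ᵥ β - 2 * (b ⬝ᵥ β)) ∧
        (∀ j, 0 < σ j * βs j)} →
      ∃ l B0 B1 B2 : ℝ, 0 ≤ l ∧ 0 < σ 0 * B0 ∧ 0 < σ 1 * B1 ∧ 0 < σ 2 * B2 ∧
        b 0 - (B0 + A*B1 + B*B2) = l * σ 0 ∧
        b 1 - (A*B0 + B1 + C*B2) = l * σ 1 ∧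
        b 2 - (B*B0 + C*B1 + B2) = l * σ 2 := by
    intro σ hσ
    obtain ⟨hpm, t, ht, βs, hfeas, hmin, hsgn⟩ := hσ
    have hfeasS : |βs 0| + |βs 1| + |βs 2| ≤ t := by
      rw [Fin.sum_univ_three] at hfeas; exact hfeas
    have hminS : ∀ x0 x1 x2 : ℝ, |x0| + |x1| + |x2| ≤ t →
        ((βs 0)^2 + (βs 1)^2 + (βs 2)^2 + 2*A*(βs 0)*(βs 1) + 2*B*(βs 0)*(βs 2)
          + 2*C*(βs 1)*(βs 2)) - 2*(b 0*(βs 0) + b 1*(βs 1) + b 2*(βs 2))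
        ≤ (x0^2 + x1^2 + x2^2 + 2*A*x0*x1 + 2*B*x0*x2 + 2*C*x1*x2)
          - 2*(b 0*x0 + b 1*x1 + b 2*x2) := by
      intro x0 x1 x2 hx
      have hx' : ∑ j, |(![x0, x1, x2] : Fin 3 → ℝ) j| ≤ t := by
        rw [Fin.sum_univ_three]; simpa using hx
      have h := hmin ![x0, x1, x2] hx'
      rw [qval, qval, bval, bval] at h
      simp only [Matrix.cons_val_zero, Matrix.cons_val_one, Matrix.head_cons] at h
      have h2 : (![x0, x1, x2] : Fin 3 → ℝ) 2 = x2 := by simp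
      rw [h2] at h
      linarith [h]
    obtain ⟨l, hl, r0, r1, r2⟩ := kkt A B C (b 0) (b 1) (b 2) t (βs 0) (βs 1) (βs 2)
      (σ 0) (σ 1) (σ 2) (hpm 0) (hpm 1) (hpm 2) (hsgn 0) (hsgn 1) (hsgn 2) hfeasS hminS
    exact ⟨l, βs 0, βs 1, βs 2, hl, hsgn 0, hsgn 1, hsgn 2, r0, r1, r2⟩
  -- finiteness
  have hfin8 : ({σ : Fin 3 → ℝ | ∀ j, σ j = 1 ∨ σ j = -1}).Finite := by
    have hsub : {σ : Fin 3 → ℝ | ∀ j, σ j = 1 ∨ σ j = -1}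
        ⊆ Set.pi Set.univ (fun _ : Fin 3 => ({1, -1} : Set ℝ)) := by
      intro σ hσ j _
      rcases hσ j with h | h <;> simp [h]
    exact (Set.Finite.pi (fun _ => Set.toFinite _)).subset hsub
  have hSfin : ({σ : Fin 3 → ℝ | (∀ j, σ j = 1 ∨ σ j = -1) ∧
      ∃ t : ℝ, 0 < t ∧ ∃ βs : Fin 3 → ℝ,
        (∑ j, |βs j| ≤ t) ∧
        (∀ β : Fin 3 → ℝ, ∑ j, |β j| ≤ t →
          (K₁ *ᵥ βs) ⬝ᵥ βs - 2 * (b ⬝ᵥ βs) ≤ (K₁ *ᵥ β) ⬝ᵥ β - 2 * (b ⬝ᵥ β)) ∧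
        (∀ j, 0 < σ j * βs j)}).Finite :=
    hfin8.subset (fun σ hσ => hσ.1)
  by_contra hcard
  push_neg at hcard
  obtain ⟨σ, hσ, τ, hτ, ρ, hρ, hστ, hσρ, hτρ⟩ := (Set.two_lt_ncard hSfin).1 hcard
  have hpmσ := hσ.1
  have hpmτ := hτ.1
  have hpmρ := hρ.1
  obtain ⟨l, B0, B1, B2, hl, v0, v1, v2, r0, r1, r2⟩ := member_rows σ hσ
  obtain ⟨m, G0, G1, G2, hm, w0, w1, w2, q0, q1, q2⟩ := member_rows τ hτ
  obtain ⟨n, H0, H1, H2, hn, u0, u1, u2, o0, o1, o2⟩ := member_rows ρ hρ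
  have funne : ∀ x y : Fin 3 → ℝ, x ≠ y → ¬(x 0 = y 0 ∧ x 1 = y 1 ∧ x 2 = y 2) := by
    intro x y hxy ⟨e0, e1, e2⟩
    exact hxy (funext fun j => by fin_cases j <;> assumption)
  have p1 := pair_scalar A B C P3 (b 0) (b 1) (b 2) (σ 0) (σ 1) (σ 2) (τ 0) (τ 1) (τ 2)
    l m B0 B1 B2 G0 G1 G2 (hpmσ 0) (hpmσ 1) (hpmσ 2) (hpmτ 0) (hpmτ 1) (hpmτ 2)
    hl hm v0 v1 v2 w0 w1 w2 r0 r1 r2 q0 q1 q2 (funne σ τ hστ)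
  have p2 := pair_scalar A B C P3 (b 0) (b 1) (b 2) (σ 0) (σ 1) (σ 2) (ρ 0) (ρ 1) (ρ 2)
    l n B0 B1 B2 H0 H1 H2 (hpmσ 0) (hpmσ 1) (hpmσ 2) (hpmρ 0) (hpmρ 1) (hpmρ 2)
    hl hn v0 v1 v2 u0 u1 u2 r0 r1 r2 o0 o1 o2 (funne σ ρ hσρ)
  have p3 := pair_scalar A B C P3 (b 0) (b 1) (b 2) (τ 0) (τ 1) (τ 2) (ρ 0) (ρ 1) (ρ 2)
    m n G0 G1 G2 H0 H1 H2 (hpmτ 0) (hpmτ 1) (hpmτ 2) (hpmρ 0) (hpmρ 1) (hpmρ 2)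
    hm hn w0 w1 w2 u0 u1 u2 q0 q1 q2 o0 o1 o2 (funne τ ρ hτρ)
  exact parity (σ 0) (σ 1) (σ 2) (τ 0) (τ 1) (τ 2) (ρ 0) (ρ 1) (ρ 2)
    (hpmσ 0) (hpmσ 1) (hpmσ 2) (hpmτ 0) (hpmτ 1) (hpmτ 2) (hpmρ 0) (hpmρ 1) (hpmρ 2)
    p1 p2 p3
end

section
/- Let p = 3 and let K₁ be a normalized symmetric positive definite real 3×3 matrix with off-diagonal entries J₁₂, J₁₃, J₂₃ (all diagonal entries equal 1), b ∈ ℝ³, and f(β) = ⟨K₁β, β⟩ − 2⟨b, β⟩. Fix an index l ∈ {1, 2, 3} and let {a, b'} = {1, 2, 3} \ {l}. Suppose there exist 0 < t₂ < t₁ and σ, σ' ∈ {−1, 1}³ with σ'_l = −σ_l and σ'_a = σ_a, σ'_{b'} = σ_{b'}, and minimizers β*₁ of f over B₁(t₁) with strict sign pattern σ and β*₂ of f over B₁(t₂) with strict sign pattern σ' (i.e., the lasso solution passes from the interior of one face of the octahedron to the interior of the adjacent face over the edge β_l = 0). Then (σ_a·J_{la} + σ_{b'}·J_{lb'})² − (1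 + σ_a·σ_{b'}·J_{ab'})² > 0, where J_{uv} denotes the (u,v) entry of K₁. -/
open Finset Matrix

lemma aux_le_zero (c q m : ℝ) (hm : 0 < m) (H : ∀ t : ℝ, 0 < t → t < m → c ≤ t * q) : c ≤ 0 := by
  by_contra h
  push_neg at h
  have hq : 0 < q := by
    rcases le_or_gt q 0 with hq | hq
    · have := H (m/2) (by linarith) (by linarith)
      nlinarith
    · exact hq
  have ht : 0 < min (m/2) (c/(2*q)) := by positivity
  have h1 := H _ ht (lt_of_le_of_lt (min_le_left _ _) (by linarith))
  have h2 : min (m/2) (c/(2*q)) ≤ c/(2*q) := min_le_right _ _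
  have h3 : min (m/2) (c/(2*q)) * q ≤ (c/(2*q)) * q := by nlinarith
  have h4 : (c/(2*q)) * q = c/2 := by field_simp
  nlinarith

lemma sgn_abs (s x : ℝ) (hs : s = 1 ∨ s = -1) (h : 0 < s * x) : |x| = s * x := by
  rcases hs with rfl | rfl
  · rw [one_mul] at h ⊢; exact abs_of_pos h
  · have : x < 0 := by linarith [neg_pos.mp (by linarith : 0 < -x)]
    rw [abs_of_neg this]; ring

lemma kkt_s18 (K : Matrix (Fin 3) (Fin 3) ℝ) (hs : K.IsSymm)
    (hnorm : ∀ i, K i i = 1) (b : Fin 3 → ℝ)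
    (τ : Fin 3 → ℝ) (hτ : ∀ j, τ j = 1 ∨ τ j = -1)
    (t : ℝ) (β : Fin 3 → ℝ)
    (hmem : ∑ j, |β j| ≤ t)
    (hmin : ∀ β' : Fin 3 → ℝ, ∑ j, |β' j| ≤ t →
      (K *ᵥ β) ⬝ᵥ β - 2 * (b ⬝ᵥ β) ≤ (K *ᵥ β') ⬝ᵥ β' - 2 * (b ⬝ᵥ β'))
    (hsign : ∀ j, 0 < τ j * β j) :
    ∃ μ : ℝ, 0 ≤ μ ∧ (∀ j, (K *ᵥ β) j - b j = -μ * τ j) ∧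
      (μ = 0 ∨ ∑ j, |β j| = t) := by
  have hτ2 : ∀ j, τ j * τ j = 1 := fun j => by rcases hτ j with h | h <;> rw [h] <;> norm_num
  have Bsym : ∀ v w : Fin 3 → ℝ, (K *ᵥ v) ⬝ᵥ w = (K *ᵥ w) ⬝ᵥ v := by
    intro v w
    rw [dotProduct_comm, dotProduct_mulVec, ← mulVec_transpose, hs.eq]
  -- quadratic expansion
  have fdiff : ∀ (v : Fin 3 → ℝ) (ε : ℝ),
      (K *ᵥ (β + ε • v)) ⬝ᵥ (β + ε • v) - 2 * (b ⬝ᵥ (β + ε • v)) =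
      ((K *ᵥ β) ⬝ᵥ β - 2 * (b ⬝ᵥ β)) + 2 * ε * (((K *ᵥ β) ⬝ᵥ v) - b ⬝ᵥ v)
        + ε ^ 2 * ((K *ᵥ v) ⬝ᵥ v) := by
    intro v ε
    have h1 : (K *ᵥ v) ⬝ᵥ β = (K *ᵥ β) ⬝ᵥ v := Bsym v β
    simp only [mulVec_add, mulVec_smul, dotProduct_add, add_dotProduct, smul_dotProduct,
      dotProduct_smul, smul_eq_mul]
    rw [h1]; ring
  -- l1 norm of perturbation
  have hsum : ∀ (v : Fin 3 → ℝ) (ε : ℝ), (∀ j, 0 < τ j * ((β + ε • v) j)) →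
      ∑ j, |(β + ε • v) j| = (∑ j, |β j|) + ε * (τ ⬝ᵥ v) := by
    intro v ε hpos
    have h1 : ∀ j, |(β + ε • v) j| = |β j| + ε * (τ j * v j) := by
      intro j
      rw [sgn_abs (τ j) _ (hτ j) (hpos j), sgn_abs (τ j) _ (hτ j) (hsign j)]
      simp only [Pi.add_apply, Pi.smul_apply, smul_eq_mul]
      ring
    rw [Finset.sum_congr rfl (fun j _ => h1 j), Finset.sum_add_distrib, dotProduct,
      Finset.mul_sum]
  -- gradient dot products with single vectors
  have hdotsingle : ∀ (j : Fin 3) (r : ℝ), (K *ᵥ β) ⬝ᵥ (Pi.single j r) - b ⬝ᵥ (Pi.single j r)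
      = ((K *ᵥ β) j - b j) * r := by
    intro j r
    simp [dotProduct_single]
    ring
  have hQ1 : ∀ (j : Fin 3) (r : ℝ), (K *ᵥ (Pi.single j r)) ⬝ᵥ (Pi.single j r) = r ^ 2 := by
    intro j r
    rw [mulVec_single, dotProduct_single]
    simp [hnorm j]
    ring
  -- step 1 : τ j * grad j ≤ 0
  have step1 : ∀ j, τ j * ((K *ᵥ β) j - b j) ≤ 0 := by
    intro j
    apply aux_le_zero _ (1/2) (τ j * β j) (hsign j)
    intro s hs0 hsm
    have hsgn : ∀ k, 0 < τ k * ((β + (-s) • (Pi.single j (τ j) : Fin 3 → ℝ)) k) := by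
      intro k
      by_cases hk : k = j
      · subst hk
        simp only [Pi.add_apply, Pi.smul_apply, Pi.single_eq_same, smul_eq_mul]
        have := hτ2 k
        nlinarith [hsign k]
      · simp only [Pi.add_apply, Pi.smul_apply, Pi.single_eq_of_ne hk, smul_eq_mul,
          mul_zero, add_zero]
        exact hsign k
    have hmem' : ∑ k, |(β + (-s) • (Pi.single j (τ j) : Fin 3 → ℝ)) k| ≤ t := by
      rw [hsum _ (-s) hsgn]
      have hτv : τ ⬝ᵥ (Pi.single j (τ j) : Fin 3 → ℝ) = 1 := by
        simp [dotProduct_single]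
        exact hτ2 j
      rw [hτv]
      nlinarith
    have hthis := hmin _ hmem'
    rw [fdiff _ (-s), hdotsingle j (τ j), hQ1 j (τ j)] at hthis
    have hsq : τ j ^ 2 = 1 := by have := hτ2 j; nlinarith
    rw [hsq] at hthis
    nlinarith [hthis, hs0]
  -- step 2: equal across coordinates
  have step2 : ∀ j k, j ≠ k → τ j * ((K *ᵥ β) j - b j) = τ k * ((K *ᵥ β) k - b k) := by
    intro j k hjk
    obtain ⟨v, hv⟩ : ∃ v : Fin 3 → ℝ, v = fun m => Pi.single j (τ j) m - Pi.single k (τ k) m :=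
      ⟨_, rfl⟩
    have hvj : v j = τ j := by rw [hv]; simp [Pi.single_eq_of_ne hjk]
    have hvk : v k = -τ k := by rw [hv]; simp [Pi.single_eq_of_ne (Ne.symm hjk)]
    have hvo : ∀ m, m ≠ j → m ≠ k → v m = 0 := by
      intro m hmj hmk
      rw [hv]; simp [Pi.single_eq_of_ne hmj, Pi.single_eq_of_ne hmk]
    have hsplit : ∀ w : Fin 3 → ℝ, w ⬝ᵥ v = w j * τ j - w k * τ k := by
      intro w
      rw [hv]
      simp only [dotProduct, Pi.single_apply, mul_sub, mul_ite, mul_zero,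
        Finset.sum_sub_distrib, Finset.sum_ite_eq', Finset.mem_univ, if_true]
    have hτv : τ ⬝ᵥ v = 0 := by
      rw [hsplit]
      rw [hτ2 j, hτ2 k]
      ring
    have hm : 0 < min (τ j * β j) (τ k * β k) := lt_min (hsign j) (hsign k)
    have hsgn : ∀ (ε : ℝ), |ε| < min (τ j * β j) (τ k * β k) →
        ∀ m, 0 < τ m * ((β + ε • v) m) := by
      intro ε hε m
      have hε1 : ε < τ k * β k := lt_of_le_of_lt (le_abs_self ε) (lt_of_lt_of_le hε (min_le_right _ _))
      have hε2 : -ε < τ j * β j := lt_of_le_of_lt (neg_le_abs ε) (lt_of_lt_of_le hε (min_le_left _ _))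
      by_cases hmj : m = j
      · subst hmj
        simp only [Pi.add_apply, Pi.smul_apply, smul_eq_mul, hvj]
        have := hτ2 m
        nlinarith [hsign m]
      · by_cases hmk : m = k
        · subst hmk
          simp only [Pi.add_apply, Pi.smul_apply, smul_eq_mul, hvk]
          have := hτ2 m
          nlinarith [hsign m]
        · simp only [Pi.add_apply, Pi.smul_apply, smul_eq_mul, hvo m hmj hmk,
            mul_zero, add_zero]
          exact hsign m
    have hgrad : (K *ᵥ β) ⬝ᵥ v - b ⬝ᵥ v
        = τ j * ((K *ᵥ β) j - b j) - τ k * ((K *ᵥ β) k - b k) := by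
      rw [hsplit (K *ᵥ β), hsplit b]
      ring
    have key : ∀ (ε : ℝ), |ε| < min (τ j * β j) (τ k * β k) →
        0 ≤ 2 * ε * (τ j * ((K *ᵥ β) j - b j) - τ k * ((K *ᵥ β) k - b k))
          + ε ^ 2 * ((K *ᵥ v) ⬝ᵥ v) := by
      intro ε hε
      have hmem' : ∑ m, |(β + ε • v) m| ≤ t := by
        rw [hsum _ ε (hsgn ε hε), hτv, mul_zero, add_zero]; exact hmem
      have hthis := hmin _ hmem'
      rw [fdiff _ ε, hgrad] at hthis
      linarith
    have h1 : τ j * ((K *ᵥ β) j - b j) - τ k * ((K *ᵥ β) k - b k) ≤ 0 := by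
      apply aux_le_zero _ (((K *ᵥ v) ⬝ᵥ v)/2) _ hm
      intro s hs0 hsm
      have hk := key (-s) (by rw [abs_neg, abs_of_pos hs0]; exact hsm)
      nlinarith [hk, hs0]
    have h2 : τ k * ((K *ᵥ β) k - b k) - τ j * ((K *ᵥ β) j - b j) ≤ 0 := by
      apply aux_le_zero _ (((K *ᵥ v) ⬝ᵥ v)/2) _ hm
      intro s hs0 hsm
      have hk := key s (by rw [abs_of_pos hs0]; exact hsm)
      nlinarith [hk, hs0]
    linarith
  -- define μ
  have hall : ∀ j, τ j * ((K *ᵥ β) j - b j) = τ 0 * ((K *ᵥ β) 0 - b 0) := by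
    intro j
    by_cases hj : j = 0
    · subst hj; rfl
    · exact step2 j 0 hj
  have hcomp : ∀ j, (K *ᵥ β) j - b j = -(-(τ 0 * ((K *ᵥ β) 0 - b 0))) * τ j := by
    intro j
    have h1 := hall j
    have h2 := hτ2 j
    linear_combination τ j * h1 - ((K *ᵥ β) j - b j) * h2
  refine ⟨-(τ 0 * ((K *ᵥ β) 0 - b 0)), by linarith [step1 0], hcomp, ?_⟩
  rcases eq_or_lt_of_le hmem with heq | hlt
  · exact Or.inr heq
  · left
    have step3 : -(τ 0 * ((K *ᵥ β) 0 - b 0)) ≤ 0 := by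
      apply aux_le_zero _ (1/2) (t - ∑ j, |β j|) (by linarith)
      intro s hs0 hsm
      have hsgn : ∀ k, 0 < τ k * ((β + s • (Pi.single 0 (τ 0) : Fin 3 → ℝ)) k) := by
        intro k
        by_cases hk : k = 0
        · subst hk
          simp only [Pi.add_apply, Pi.smul_apply, Pi.single_eq_same, smul_eq_mul]
          have := hτ2 (0 : Fin 3)
          nlinarith [hsign (0 : Fin 3)]
        · simp only [Pi.add_apply, Pi.smul_apply, Pi.single_eq_of_ne hk, smul_eq_mul,
            mul_zero, add_zero]
          exact hsign k
      have hmem' : ∑ k, |(β + s • (Pi.single 0 (τ 0) : Fin 3 → ℝ)) k| ≤ t := by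
        rw [hsum _ s hsgn]
        have hτv : τ ⬝ᵥ (Pi.single 0 (τ 0) : Fin 3 → ℝ) = 1 := by
          simp [dotProduct_single]
          exact hτ2 0
        rw [hτv]
        linarith
      have hthis := hmin _ hmem'
      rw [fdiff _ s, hdotsingle 0 (τ 0), hQ1 0 (τ 0)] at hthis
      have hsq : τ 0 ^ 2 = 1 := by have := hτ2 0; nlinarith
      rw [hsq] at hthis
      nlinarith [hthis, hs0]
    linarith [step1 0]

lemma sum3 {l a c : Fin 3} (hal : a ≠ l) (hcl : c ≠ l) (hac : a ≠ c) (f : Fin 3 → ℝ) :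
    ∑ j, f j = f l + f a + f c := by
  have huniv : ({l, a, c} : Finset (Fin 3)) = Finset.univ := by
    apply Finset.eq_univ_of_card
    rw [Finset.card_insert_of_notMem (by simp [Ne.symm hal, Ne.symm hcl]),
      Finset.card_insert_of_notMem (by simp [hac]), Finset.card_singleton]
    simp
  rw [← huniv, Finset.sum_insert (by simp [Ne.symm hal, Ne.symm hcl]),
    Finset.sum_insert (by simp [hac]), Finset.sum_singleton, add_assoc]


lemma offdiag_lt_one (K : Matrix (Fin 3) (Fin 3) ℝ) (hs : K.IsSymm)
    (hpos : ∀ v : Fin 3 → ℝ, v ≠ 0 → 0 < (K *ᵥ v) ⬝ᵥ v)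
    (hnorm : ∀ i, K i i = 1)
    (l a c : Fin 3) (hal : a ≠ l) (hcl : c ≠ l) (hac : a ≠ c) :
    K a c * K a c < 1 := by
  have mv3 : ∀ (v : Fin 3 → ℝ) (i : Fin 3),
      (K *ᵥ v) i = K i l * v l + K i a * v a + K i c * v c := by
    intro v i
    rw [show (K *ᵥ v) i = ∑ j, K i j * v j from rfl, sum3 hal hcl hac]
  have dot3 : ∀ v w : Fin 3 → ℝ, v ⬝ᵥ w = v l * w l + v a * w a + v c * w c := by
    intro v w
    rw [dotProduct, sum3 hal hcl hac]
  have hvne : (fun j => if j = a then (1:ℝ) else if j = c then -(K a c) else 0) ≠ 0 := by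
    intro h0
    have := congrFun h0 a
    simp at this
  have hq := hpos _ hvne
  rw [dot3, mv3, mv3, mv3] at hq
  simp only [if_pos rfl, Ne.symm hal, Ne.symm hcl, hac, Ne.symm hac, if_true, if_false,
    ite_true, ite_false, reduceIte] at hq
  rw [hs.apply a c, hnorm a, hnorm c] at hq
  nlinarith [hq]

lemma det3_pos (K : Matrix (Fin 3) (Fin 3) ℝ) (hs : K.IsSymm)
    (hpos : ∀ v : Fin 3 → ℝ, v ≠ 0 → 0 < (K *ᵥ v) ⬝ᵥ v)
    (hnorm : ∀ i, K i i = 1)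
    (l a c : Fin 3) (hal : a ≠ l) (hcl : c ≠ l) (hac : a ≠ c) :
    0 < 1 + 2 * K l a * K l c * K a c - K l a * K l a - K l c * K l c - K a c * K a c := by
  have hDlt := offdiag_lt_one K hs hpos hnorm l a c hal hcl hac
  have mv3 : ∀ (v : Fin 3 → ℝ) (i : Fin 3),
      (K *ᵥ v) i = K i l * v l + K i a * v a + K i c * v c := by
    intro v i
    rw [show (K *ᵥ v) i = ∑ j, K i j * v j from rfl, sum3 hal hcl hac]
  have dot3 : ∀ v w : Fin 3 → ℝ, v ⬝ᵥ w = v l * w l + v a * w a + v c * w c := by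
    intro v w
    rw [dotProduct, sum3 hal hcl hac]
  have hvne : (fun j => if j = l then 1 - K a c * K a c
      else if j = a then K l c * K a c - K l a
      else if j = c then K l a * K a c - K l c else 0) ≠ 0 := by
    intro h0
    have h1 := congrFun h0 l
    simp only [eq_self_iff_true, if_true, Pi.zero_apply] at h1
    nlinarith [hDlt, h1]
  have hq := hpos _ hvne
  rw [dot3, mv3, mv3, mv3] at hq
  simp only [if_pos rfl, Ne.symm hal, Ne.symm hcl, hac, Ne.symm hac, hal, hcl,
    if_true, if_false, ite_true, ite_false, reduceIte] at hq
  rw [hs.apply l a, hs.apply l c, hs.apply a c, hnorm l, hnorm a, hnorm c] at hq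
  nlinarith [hq, hDlt]

set_option maxHeartbeats 4000000 in
/-- for `p = 3` with a normalized symmetric positive definite covariance
matrix, if the lasso solution passes from the interior of one face of the octahedron to
the interior of the adjacent face over the edge `β_l = 0` (so the sign of the `l`-th
coordinate flips while the other two signs `σ_a, σ_{b'}` persist), then
`(σ_a·J_{la} + σ_{b'}·J_{lb'})² − (1 + σ_a·σ_{b'}·J_{ab'})² > 0`. -/
theorem stmt_18 (K₁ : Matrix (Fin 3) (Fin 3) ℝ) (hsymm : K₁.IsSymm)
    (hpos : ∀ v : Fin 3 → ℝ, v ≠ 0 → 0 < (K₁ *ᵥ v) ⬝ᵥ v)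
    (hnorm : ∀ i, K₁ i i = 1)
    (b : Fin 3 → ℝ)
    (l a c : Fin 3) (hal : a ≠ l) (hcl : c ≠ l) (hac : a ≠ c)
    (σ σ' : Fin 3 → ℝ)
    (hσ : ∀ j, σ j = 1 ∨ σ j = -1) (hσ' : ∀ j, σ' j = 1 ∨ σ' j = -1)
    (hflip : σ' l = -σ l) (hkeepa : σ' a = σ a) (hkeepc : σ' c = σ c)
    (t₁ t₂ : ℝ) (ht₂ : 0 < t₂) (h21 : t₂ < t₁)
    (β₁ β₂ : Fin 3 → ℝ)
    (hmem₁ : ∑ j, |β₁ j| ≤ t₁)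
    (hmin₁ : ∀ β : Fin 3 → ℝ, ∑ j, |β j| ≤ t₁ →
      (K₁ *ᵥ β₁) ⬝ᵥ β₁ - 2 * (b ⬝ᵥ β₁) ≤ (K₁ *ᵥ β) ⬝ᵥ β - 2 * (b ⬝ᵥ β))
    (hsign₁ : ∀ j, 0 < σ j * β₁ j)
    (hmem₂ : ∑ j, |β₂ j| ≤ t₂)
    (hmin₂ : ∀ β : Fin 3 → ℝ, ∑ j, |β j| ≤ t₂ →
      (K₁ *ᵥ β₂) ⬝ᵥ β₂ - 2 * (b ⬝ᵥ β₂) ≤ (K₁ *ᵥ β) ⬝ᵥ β - 2 * (b ⬝ᵥ β))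
    (hsign₂ : ∀ j, 0 < σ' j * β₂ j) :
    0 < (σ a * K₁ l a + σ c * K₁ l c) ^ 2 - (1 + σ a * σ c * K₁ a c) ^ 2 := by
  have hs2 : ∀ j, σ j * σ j = 1 := fun j => by rcases hσ j with h | h <;> rw [h] <;> norm_num
  have hs2' : ∀ j, σ' j * σ' j = 1 := fun j => by rcases hσ' j with h | h <;> rw [h] <;> norm_num
  have cases3 : ∀ j : Fin 3, j = l ∨ j = a ∨ j = c := by
    intro j
    have huniv : ({l, a, c} : Finset (Fin 3)) = Finset.univ := by
      apply Finset.eq_univ_of_card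
      rw [Finset.card_insert_of_notMem (by simp [Ne.symm hal, Ne.symm hcl]),
        Finset.card_insert_of_notMem (by simp [hac]), Finset.card_singleton]
      simp
    have : j ∈ ({l, a, c} : Finset (Fin 3)) := huniv ▸ Finset.mem_univ j
    simpa using this
  have Bsym : ∀ v w : Fin 3 → ℝ, (K₁ *ᵥ v) ⬝ᵥ w = (K₁ *ᵥ w) ⬝ᵥ v := by
    intro v w
    rw [dotProduct_comm, dotProduct_mulVec, ← mulVec_transpose, hsymm.eq]
  have hpsd : ∀ v : Fin 3 → ℝ, 0 ≤ (K₁ *ᵥ v) ⬝ᵥ v := by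
    intro v
    by_cases h : v = 0
    · simp [h]
    · exact (hpos v h).le
  have hinj : ∀ v w : Fin 3 → ℝ, K₁ *ᵥ v = K₁ *ᵥ w → v = w := by
    intro v w h
    by_contra hne
    have h0 : K₁ *ᵥ (v - w) = 0 := by rw [mulVec_sub, h, sub_self]
    have := hpos (v - w) (sub_ne_zero.mpr hne)
    rw [h0] at this
    simp at this
  have hsurj : Function.Surjective (K₁.mulVecLin) := by
    rw [← LinearMap.injective_iff_surjective]
    intro v w h
    exact hinj v w (by simpa [mulVecLin_apply] using h)
  obtain ⟨u, hu⟩ := hsurj σ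
  obtain ⟨u', hu'⟩ := hsurj σ'
  obtain ⟨z, hz⟩ := hsurj (Pi.single l 1)
  rw [mulVecLin_apply] at hu hu' hz
  -- KKT at both levels
  obtain ⟨μ₁, hμ₁0, hμ₁, hdic⟩ := kkt_s18 K₁ hsymm hnorm b σ hσ t₁ β₁ hmem₁ hmin₁ hsign₁
  obtain ⟨μ₂, hμ₂0, hμ₂, _⟩ := kkt_s18 K₁ hsymm hnorm b σ' hσ' t₂ β₂ hmem₂ hmin₂ hsign₂
  -- w = β₁ - β₂ = μ₂ u' - μ₁ u
  have hw : β₁ - β₂ = μ₂ • u' - μ₁ • u := by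
    apply hinj
    rw [mulVec_sub, mulVec_sub, mulVec_smul, mulVec_smul, hu, hu']
    funext j
    have e1 := hμ₁ j
    have e2 := hμ₂ j
    simp only [Pi.sub_apply, Pi.smul_apply, smul_eq_mul]
    linarith
  -- u = u' + 2 σ l • z
  have huu : u = u' + (2 * σ l) • z := by
    apply hinj
    rw [mulVec_add, mulVec_smul, hu, hu', hz]
    funext j
    simp only [Pi.add_apply, Pi.smul_apply, smul_eq_mul]
    rcases cases3 j with rfl | rfl | rfl
    · rw [Pi.single_eq_same, hflip]; ring
    · rw [Pi.single_eq_of_ne hal, hkeepa]; ring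
    · rw [Pi.single_eq_of_ne hcl, hkeepc]; ring
  -- dot products of z
  have hzl : ∀ v : Fin 3 → ℝ, (K₁ *ᵥ z) ⬝ᵥ v = v l := by
    intro v
    rw [hz]
    simp [single_dotProduct]
  have hσz : σ ⬝ᵥ z = u l := by rw [← hu, Bsym, hzl]
  have hσ'z : σ' ⬝ᵥ z = u' l := by rw [← hu', Bsym, hzl]
  -- positivity facts
  have hune : u ≠ 0 := by
    intro h0
    have : σ l = 0 := by rw [← hu, h0, mulVec_zero]; rfl
    have := hs2 l
    rw [this] at *
    nlinarith [hs2 l]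
  have hu'ne : u' ≠ 0 := by
    intro h0
    have h1 : σ' l = 0 := by rw [← hu', h0, mulVec_zero]; rfl
    have h2 := hs2' l
    rw [h1] at h2
    nlinarith
  have hzne : z ≠ 0 := by
    intro h0
    have h1 : (Pi.single l 1 : Fin 3 → ℝ) l = 0 := by rw [← hz, h0, mulVec_zero]; rfl
    rw [Pi.single_eq_same] at h1
    norm_num at h1
  have hγ : 0 < σ' ⬝ᵥ u' := by
    have := hpos u' hu'ne
    rwa [hu'] at this
  have hα : 0 < σ ⬝ᵥ u := by
    have := hpos u hune
    rwa [hu] at this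
  have hg : 0 < z l := by
    have := hpos z hzne
    rwa [Bsym, hzl] at this
  -- scalar relations
  have hyx : σ l * u l = σ l * u' l + 2 * z l := by
    have h1 : u l = u' l + 2 * σ l * z l := by
      have := congrFun huu l
      simpa [Pi.add_apply, Pi.smul_apply, smul_eq_mul] using this
    have h2 := hs2 l
    linear_combination σ l * h1 + 2 * z l * h2
  have dot3 : ∀ v w : Fin 3 → ℝ, v ⬝ᵥ w = v l * w l + v a * w a + v c * w c := by
    intro v w
    rw [dotProduct, sum3 hal hcl hac]
  have hδγ : σ ⬝ᵥ u' = σ' ⬝ᵥ u' + 2 * (σ l * u' l) := by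
    rw [dot3 σ u', dot3 σ' u', hflip, hkeepa, hkeepc]
    ring
  have hαδ : σ ⬝ᵥ u = σ ⬝ᵥ u' + 2 * (σ l * u l) := by
    have h1 : σ ⬝ᵥ u = σ ⬝ᵥ u' + (2 * σ l) * (σ ⬝ᵥ z) := by
      rw [huu, dotProduct_add, dotProduct_smul, smul_eq_mul]
    rw [h1, hσz]
    ring
  -- Cauchy-Schwarz : (u' l)^2 ≤ z l * γ
  have hCS : u' l * u' l ≤ z l * (σ' ⬝ᵥ u') := by
    have hv := hpsd (z l • u' - u' l • z)
    have hexp : (K₁ *ᵥ (z l • u' - u' l • z)) ⬝ᵥ (z l • u' - u' l • z) =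
        z l * z l * (σ' ⬝ᵥ u') - 2 * (z l * (u' l * u' l)) + u' l * u' l * z l := by
      simp only [mulVec_sub, mulVec_smul, sub_dotProduct, dotProduct_sub,
        smul_dotProduct, dotProduct_smul, smul_eq_mul, hu', hσ'z, hzl]
      ring
    rw [hexp] at hv
    nlinarith [hv, hg]
  -- sign facts for w
  have hwl : 0 < σ l * (β₁ l - β₂ l) := by
    have h1 := hsign₁ l
    have h2 := hsign₂ l
    have h3 : σ' l * β₂ l = -(σ l * β₂ l) := by rw [hflip]; ring
    nlinarith [h1, h2, h3]
  have hwl' : σ l * (β₁ l - β₂ l) = μ₂ * (σ l * u' l) - μ₁ * (σ l * u l) := by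
    have := congrFun hw l
    simp only [Pi.sub_apply, Pi.smul_apply, smul_eq_mul] at this
    linear_combination σ l * this
  have hkey1 : 0 < μ₂ * (σ l * u' l) - μ₁ * (σ l * u l) := by
    rw [← hwl']; exact hwl
  -- main claim : 0 < σ l * u' l
  have hxpos : 0 < σ l * u' l := by
    rcases hdic with hμz | hact
    · rw [hμz] at hkey1
      nlinarith [hkey1, hμ₂0]
    · -- constraint active at t₁
      have habs1 : ∑ j, |β₁ j| = σ ⬝ᵥ β₁ := by
        rw [dotProduct]
        exact Finset.sum_congr rfl (fun j _ => sgn_abs (σ j) (β₁ j) (hσ j) (hsign₁ j))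
      have habs2 : ∑ j, |β₂ j| = σ' ⬝ᵥ β₂ := by
        rw [dotProduct]
        exact Finset.sum_congr rfl (fun j _ => sgn_abs (σ' j) (β₂ j) (hσ' j) (hsign₂ j))
      have hσβ₂ : σ ⬝ᵥ β₂ = σ' ⬝ᵥ β₂ + 2 * (σ l * β₂ l) := by
        rw [dot3 σ β₂, dot3 σ' β₂, hflip, hkeepa, hkeepc]
        ring
      have hσw : 0 < σ ⬝ᵥ β₁ - σ ⬝ᵥ β₂ := by
        have h1 : σ ⬝ᵥ β₁ = t₁ := by rw [← habs1, hact]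
        have h2 : σ' ⬝ᵥ β₂ ≤ t₂ := by rw [← habs2]; exact hmem₂
        have h3 : σ l * β₂ l < 0 := by
          have h5 := hsign₂ l
          have h6 : σ' l * β₂ l = -(σ l * β₂ l) := by rw [hflip]; ring
          linarith
        linarith [h1, h2, h3, hσβ₂, h21]
      have hkey2 : 0 < μ₂ * (σ ⬝ᵥ u') - μ₁ * (σ ⬝ᵥ u) := by
        have h1 : σ ⬝ᵥ (β₁ - β₂) = μ₂ * (σ ⬝ᵥ u') - μ₁ * (σ ⬝ᵥ u) := by
          rw [hw, dotProduct_sub, dotProduct_smul, dotProduct_smul, smul_eq_mul, smul_eq_mul]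
        have h2 : σ ⬝ᵥ (β₁ - β₂) = σ ⬝ᵥ β₁ - σ ⬝ᵥ β₂ := by
          rw [dotProduct_sub]
        rw [← h1, h2]
        exact hσw
      by_contra hx
      push_neg at hx
      have hμ₁y : μ₁ * (σ l * u l) < 0 := by nlinarith [hkey1, hμ₂0, hx]
      have hμ₁pos : 0 < μ₁ := by
        rcases eq_or_lt_of_le hμ₁0 with h0 | h0
        · rw [← h0] at hμ₁y; nlinarith [hμ₁y]
        · exact h0
      have hyneg : σ l * u l < 0 := by nlinarith [hμ₁y, hμ₁pos]
      have hμ₂pos : 0 < μ₂ := by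
        rcases eq_or_lt_of_le hμ₂0 with h0 | h0
        · rw [← h0] at hkey2; nlinarith [hkey2, hα, hμ₁pos]
        · exact h0
      have hfin : (σ l * u' l) * (σ ⬝ᵥ u) > (σ l * u l) * (σ ⬝ᵥ u') := by
        have h1 : μ₂ * ((σ l * u' l) * (σ ⬝ᵥ u)) > μ₂ * ((σ l * u l) * (σ ⬝ᵥ u')) := by
          nlinarith [hkey1, hα, hkey2, hyneg, hμ₁pos, hμ₂pos]
        exact lt_of_mul_lt_mul_left (by nlinarith [h1]) hμ₂0
      have hsubst : (σ l * u' l) * (σ ⬝ᵥ u) - (σ l * u l) * (σ ⬝ᵥ u')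
          = 2 * ((σ l * u' l) * (σ l * u' l)) - 2 * (z l * (σ' ⬝ᵥ u')) := by
        rw [hαδ, hδγ, hyx]
        ring
      have hCS' : (σ l * u' l) * (σ l * u' l) ≤ z l * (σ' ⬝ᵥ u') := by
        have h2 := hs2 l
        nlinarith [hCS, h2]
      nlinarith [hfin, hsubst, hCS']
  -- final algebra: component equations for u'
  have mv3 : ∀ (v : Fin 3 → ℝ) (i : Fin 3),
      (K₁ *ᵥ v) i = K₁ i l * v l + K₁ i a * v a + K₁ i c * v c := by
    intro v i
    rw [show (K₁ *ᵥ v) i = ∑ j, K₁ i j * v j from rfl, sum3 hal hcl hac]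
  have El : u' l + K₁ l a * u' a + K₁ l c * u' c = -(σ l) := by
    have h0 := congrFun hu' l
    rw [mv3] at h0
    rw [hnorm l, one_mul, hflip] at h0
    exact h0
  have Ea : K₁ l a * u' l + u' a + K₁ a c * u' c = σ a := by
    have h0 := congrFun hu' a
    rw [mv3] at h0
    rw [hsymm.apply l a, hnorm a, one_mul, hkeepa] at h0
    exact h0
  have Ec : K₁ l c * u' l + K₁ a c * u' a + u' c = σ c := by
    have h0 := congrFun hu' c
    rw [mv3] at h0
    rw [hsymm.apply l c, hsymm.apply a c, hnorm c, one_mul, hkeepc] at h0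
    exact h0
  have hDlt : K₁ a c * K₁ a c < 1 := offdiag_lt_one K₁ hsymm hpos hnorm l a c hal hcl hac
  have hΔ : 0 < 1 + 2 * K₁ l a * K₁ l c * K₁ a c - K₁ l a * K₁ l a - K₁ l c * K₁ l c
      - K₁ a c * K₁ a c := det3_pos K₁ hsymm hpos hnorm l a c hal hcl hac
  -- solve for u' l
  have hDu : (1 + 2 * K₁ l a * K₁ l c * K₁ a c - K₁ l a * K₁ l a - K₁ l c * K₁ l c
      - K₁ a c * K₁ a c) * u' l
      = -(σ l) * (1 - K₁ a c * K₁ a c)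
        - (1 - σ a * σ c * K₁ a c) * (σ a * K₁ l a + σ c * K₁ l c) := by
    linear_combination (1 - K₁ a c * K₁ a c) * El + (K₁ l c * K₁ a c - K₁ l a) * Ea
      + (K₁ l a * K₁ a c - K₁ l c) * Ec - K₁ a c * K₁ l a * σ c * (hs2 a)
      - K₁ a c * K₁ l c * σ a * (hs2 c)
  have heD : (σ a * σ c * K₁ a c) * (σ a * σ c * K₁ a c) = K₁ a c * K₁ a c := by
    linear_combination (K₁ a c * K₁ a c * σ c * σ c) * hs2 a + (K₁ a c * K₁ a c) * hs2 c
  have he1 : 0 < 1 - σ a * σ c * K₁ a c := by nlinarith [hDlt, heD]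
  have he2 : 0 < 1 + σ a * σ c * K₁ a c := by nlinarith [hDlt, heD]
  have hΔx : 0 < (1 + 2 * K₁ l a * K₁ l c * K₁ a c - K₁ l a * K₁ l a - K₁ l c * K₁ l c
      - K₁ a c * K₁ a c) * (σ l * u' l) := mul_pos hΔ hxpos
  have h5 : (1 + 2 * K₁ l a * K₁ l c * K₁ a c - K₁ l a * K₁ l a - K₁ l c * K₁ l c
      - K₁ a c * K₁ a c) * (σ l * u' l)
      = -(1 - K₁ a c * K₁ a c)
        - (1 - σ a * σ c * K₁ a c) * (σ l * (σ a * K₁ l a + σ c * K₁ l c)) := by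
    linear_combination σ l * hDu - (1 - K₁ a c * K₁ a c) * hs2 l
  have h6 : σ l * (σ a * K₁ l a + σ c * K₁ l c) < -(1 + σ a * σ c * K₁ a c) := by
    nlinarith [h5, hΔx, he1, heD]
  nlinarith [h6, he2, hs2 l, sq_nonneg (σ l * (σ a * K₁ l a + σ c * K₁ l c)
    + (1 + σ a * σ c * K₁ a c))]
end
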